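/- arXiv:1904.10155 — 8 statements merged into one kernel-verified Lean document; each statement's English description precedes it below -/
import Mathlib

section
/- Let d, m, k be positive integers with m ≤ k ≤ d and let A ∈ ℝ^{d×d} be a symmetric positive semidefinite matrix with rank(A) ≤ m. Then the maximum of Tr(Wᵀ A W) over the FSPCA feasible set F(d,m,k) is attained and equals the sum of the k largest diagonal entries of A. -/
/-!
On a feasible `W` supported in rows `I`, with `D` the diagonal 0/1 projection onto the
coordinates in `I`, one has `Tr(Wᵀ A W) = Tr(W Wᵀ · D A D)`. As `W Wᵀ` is an orthogonal
projection and `D A D` is positive semidefinite, this is at most `Tr(D A D) = ∑_{i ∈ I} A i i`.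
Conversely, `D A D` has rank at most `m ≤ card I`, so its column space fits inside an
`m`-dimensional subspace of the coordinate subspace of `I`; taking for `W` an orthonormal basis
of that subspace gives `W Wᵀ · D A D = D A D`, and the bound is attained.
-/

open Matrix

/-- The FSPCA feasible set: `Wᵀ W = I_m` and `W` has at most `k` nonzero rows. -/
def feasible (d m k : ℕ) (W : Matrix (Fin d) (Fin m) ℝ) : Prop :=
  Wᵀ * W = 1 ∧ {i | W i ≠ 0}.ncard ≤ k

open Module

theorem Submodule.exists_le_le_finrank_eq {K V : Type*} [Field K] [AddCommGroup V] [Module K V]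
    [FiniteDimensional K V] {S U : Submodule K V} (hSU : S ≤ U) {m : ℕ}
    (hSm : finrank K S ≤ m) (hmU : m ≤ finrank K U) :
    ∃ T : Submodule K V, S ≤ T ∧ T ≤ U ∧ finrank K T = m := by
  induction h : m - finrank K S generalizing S with
  | zero => exact ⟨S, le_rfl, hSU, by omega⟩
  | succ n ih =>
    obtain ⟨x, hxU, hxS⟩ := SetLike.exists_of_lt <|
      hSU.lt_of_ne fun hSU_eq => by subst hSU_eq; omega
    have hfinrank := finrank_sup_span_singleton hxS
    obtain ⟨T, hST, hTU, hT⟩ :=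
      ih (sup_le hSU ((span_singleton_le_iff_mem x U).2 hxU)) (by omega) (by omega)
    exact ⟨T, le_sup_left.trans hST, hTU, hT⟩

theorem Submodule.exists_orthonormal_columns {n : Type*} [Fintype n] {m : ℕ}
    (T : Submodule ℝ (n → ℝ)) (hT : finrank ℝ T = m) :
    ∃ W : Matrix n (Fin m) ℝ, Wᵀ * W = 1 ∧ (∀ a, Wᵀ a ∈ T) ∧ ∀ v ∈ T, W *ᵥ (Wᵀ *ᵥ v) = v := by
  let e := WithLp.linearEquiv 2 ℝ (n → ℝ)
  let T' := T.map (e.symm : (n → ℝ) →ₗ[ℝ] EuclideanSpace ℝ n)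
  let b : OrthonormalBasis (Fin m) ℝ T' :=
    (stdOrthonormalBasis ℝ T').reindex (finCongr ((e.symm.finrank_map_eq T).trans hT))
  refine ⟨Matrix.of fun i a => (b a : EuclideanSpace ℝ n) i, ?_, fun a => ?_, fun v hv => ?_⟩
  · ext a c
    have := orthonormal_iff_ite.mp b.orthonormal a c
    simp only [Submodule.coe_inner, EuclideanSpace.inner_eq_star_dotProduct, dotProduct] at this
    simp only [Matrix.mul_apply, transpose_apply, of_apply, Matrix.one_apply]
    rw [← this]
    exact Finset.sum_congr rfl fun j _ => by rw [star_trivial, mul_comm]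
  · show (b a : EuclideanSpace ℝ n).ofLp ∈ T
    exact T.mem_map_equiv.mp (b a).2
  · funext i
    have := congrArg (fun y : T' => (y : EuclideanSpace ℝ n) i)
      (b.sum_repr' ⟨e.symm v, Submodule.mem_map_of_mem hv⟩)
    simp only [Submodule.coe_sum, Submodule.coe_smul, WithLp.ofLp_sum, WithLp.ofLp_smul,
      Finset.sum_apply, Pi.smul_apply, smul_eq_mul, Submodule.coe_inner, PiLp.inner_apply,
      RCLike.inner_apply, conj_trivial] at this
    refine Eq.trans ?_ this
    simp only [mulVec, dotProduct, transpose_apply, of_apply]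
    refine Finset.sum_congr rfl fun a _ => ?_
    rw [mul_comm]
    exact congrArg (· * _) (Finset.sum_congr rfl fun j _ => mul_comm _ _)

theorem Matrix.trace_transpose_mul_mul_le_trace {n m : Type*} [Fintype n] [DecidableEq n]
    [Fintype m] [DecidableEq m] {W : Matrix n m ℝ} (hW : Wᵀ * W = 1) {B : Matrix n n ℝ}
    (hB : B.PosSemidef) : (Wᵀ * B * W).trace ≤ B.trace := by
  set Q := 1 - W * Wᵀ
  have hQQ : Q * Q = Q := by
    simp only [Q, sub_mul, mul_sub, one_mul, mul_one, Matrix.mul_assoc, ← Matrix.mul_assoc Wᵀ,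
      hW, Matrix.one_mul, sub_self, sub_zero]
  have hQ : Qᴴ = Q := by
    simp [Q, conjTranspose_eq_transpose_of_trivial, transpose_sub, transpose_mul]
  have hsplit : B.trace = (Wᵀ * B * W).trace + (Q * B * Q).trace := by
    rw [trace_mul_cycle, trace_mul_cycle Q, hQQ]
    simp only [Q, sub_mul, one_mul, trace_sub]
    ring
  have hQBQ := (hB.mul_mul_conjTranspose_same Q).trace_nonneg
  rw [hQ] at hQBQ
  linarith

section coordProj

variable {n : Type*} [DecidableEq n]

noncomputable def coordProj (I : Finset n) : Matrix n n ℝ :=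
  diagonal fun i => if i ∈ I then 1 else 0

theorem transpose_coordProj (I : Finset n) : (coordProj I)ᵀ = coordProj I :=
  diagonal_transpose _

variable [Fintype n]

theorem coordProj_mul_eq_self_iff {m : Type*} {I : Finset n} {W : Matrix n m ℝ} :
    coordProj I * W = W ↔ ∀ i ∉ I, W i = 0 := by
  simp only [coordProj, ← Matrix.ext_iff, diagonal_mul, funext_iff, Pi.zero_apply]
  refine forall_congr' fun i => ?_
  by_cases hi : i ∈ I <;> simp [hi, eq_comm]

theorem mem_range_coordProj_iff {I : Finset n} {v : n → ℝ} :
    v ∈ LinearMap.range (coordProj I).mulVecLin ↔ ∀ i ∉ I, v i = 0 := by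
  constructor
  · rintro ⟨u, rfl⟩ i hi
    simp [coordProj, mulVec_diagonal, hi]
  · intro hv
    refine ⟨v, funext fun i => ?_⟩
    by_cases hi : i ∈ I <;> simp [coordProj, mulVec_diagonal, hi, hv]

theorem rank_coordProj (I : Finset n) : (coordProj I).rank = I.card := by
  simp [coordProj, rank_diagonal]

theorem trace_coordProj_mul_mul_coordProj (I : Finset n) (A : Matrix n n ℝ) :
    (coordProj I * A * coordProj I).trace = ∑ i ∈ I, A i i := by
  simp [coordProj, trace, Finset.sum_ite_mem]

theorem transpose_mul_coordProj_mul_mul {m : Type*} {I : Finset n} {W : Matrix n m ℝ}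
    (hW : coordProj I * W = W) (A : Matrix n n ℝ) :
    Wᵀ * (coordProj I * A * coordProj I) * W = Wᵀ * A * W := by
  conv_rhs => rw [← hW]
  simp only [transpose_mul, transpose_coordProj, Matrix.mul_assoc]

end coordProj

theorem feasible_iff {d m k : ℕ} (hkd : k ≤ d) {W : Matrix (Fin d) (Fin m) ℝ} :
    feasible d m k W ↔ Wᵀ * W = 1 ∧ ∃ I : Finset (Fin d), I.card = k ∧ coordProj I * W = W := by
  classical
  have hsupp : {i | W i ≠ 0} = ↑(Finset.univ.filter fun i => W i ≠ 0) := by ext; simp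
  simp only [feasible, coordProj_mul_eq_self_iff, hsupp, Set.ncard_coe_finset]
  refine and_congr_right fun _ => ⟨fun hcard => ?_, ?_⟩
  · obtain ⟨I, hsI, -, hI⟩ := Finset.exists_subsuperset_card_eq (Finset.subset_univ _) hcard
      (by simpa using hkd)
    exact ⟨I, hI, fun i hi => by_contra fun h => hi (hsI (by simpa using h))⟩
  · rintro ⟨I, rfl, hI⟩
    exact Finset.card_le_card fun i hi => by_contra fun h => by simp_all

theorem trace_le_sum_diag_of_feasible {d m k : ℕ} (hkd : k ≤ d)
    {A : Matrix (Fin d) (Fin d) ℝ} (hA : A.PosSemidef) {W : Matrix (Fin d) (Fin m) ℝ}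
    (hW : feasible d m k W) :
    ∃ I : Finset (Fin d), I.card = k ∧ (Wᵀ * A * W).trace ≤ ∑ i ∈ I, A i i := by
  obtain ⟨hWW, I, hI, hDW⟩ := (feasible_iff hkd).mp hW
  have hB : (coordProj I * A * coordProj I).PosSemidef := by
    simpa [conjTranspose_eq_transpose_of_trivial, transpose_coordProj]
      using hA.mul_mul_conjTranspose_same (coordProj I)
  refine ⟨I, hI, ?_⟩
  calc (Wᵀ * A * W).trace = (Wᵀ * (coordProj I * A * coordProj I) * W).trace := by
        rw [transpose_mul_coordProj_mul_mul hDW]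
    _ ≤ (coordProj I * A * coordProj I).trace := trace_transpose_mul_mul_le_trace hWW hB
    _ = ∑ i ∈ I, A i i := trace_coordProj_mul_mul_coordProj I A

theorem exists_feasible_trace_eq_sum_diag {d m k : ℕ} (hmk : m ≤ k)
    {A : Matrix (Fin d) (Fin d) ℝ} (hrank : A.rank ≤ m) {I : Finset (Fin d)} (hI : I.card = k) :
    ∃ W : Matrix (Fin d) (Fin m) ℝ, feasible d m k W ∧ (Wᵀ * A * W).trace = ∑ i ∈ I, A i i := by
  set D := coordProj I
  set B := D * A * D
  have hBD : LinearMap.range B.mulVecLin ≤ LinearMap.range D.mulVecLin := by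
    rw [show B = D * (A * D) from Matrix.mul_assoc _ _ _, mulVecLin_mul]
    exact LinearMap.range_comp_le_range _ _
  obtain ⟨T, hBT, hTD, hT⟩ := Submodule.exists_le_le_finrank_eq hBD
    ((rank_mul_le_left _ _).trans ((rank_mul_le_right _ _).trans hrank) : B.rank ≤ m)
    (by rw [← Matrix.rank, rank_coordProj, hI]; exact hmk)
  obtain ⟨W, hWW, hWT, hproj⟩ := T.exists_orthonormal_columns hT
  have hDW : D * W = W := coordProj_mul_eq_self_iff.mpr fun i hi => funext fun a =>
    mem_range_coordProj_iff.mp (hTD (hWT a)) i hi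
  have hPB : W * Wᵀ * B = B := ext_iff_mulVec.mpr fun v => by
    simpa [Matrix.mul_assoc] using hproj _ (hBT (LinearMap.mem_range_self _ v))
  refine ⟨W, (feasible_iff (hI ▸ by simpa using I.card_le_univ)).mpr ⟨hWW, I, hI, hDW⟩, ?_⟩
  rw [← transpose_mul_coordProj_mul_mul hDW, trace_mul_cycle, hPB,
    trace_coordProj_mul_mul_coordProj]

theorem fspca_lowrank_global_general (d m k : ℕ) (hmk : m ≤ k)
    (hkd : k ≤ d) (A : Matrix (Fin d) (Fin d) ℝ) (hA : A.PosSemidef)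
    (hrank : A.rank ≤ m) :
    ∃ c : ℝ,
      IsGreatest {x : ℝ | ∃ I : Finset (Fin d), I.card = k ∧ x = ∑ i ∈ I, A i i} c ∧
      IsGreatest {x : ℝ | ∃ W : Matrix (Fin d) (Fin m) ℝ, feasible d m k W ∧
        x = (Wᵀ * A * W).trace} c := by
  obtain ⟨I, hI, hmax⟩ := Finset.exists_max_image (Finset.univ.powersetCard k)
    (fun I => ∑ i ∈ I, A i i) (Finset.powersetCard_nonempty.mpr (by simpa using hkd))
  have hIk : I.card = k := (Finset.mem_powersetCard.mp hI).2
  have hle : ∀ J : Finset (Fin d), J.card = k → ∑ i ∈ J, A i i ≤ ∑ i ∈ I, A i i :=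
    fun J hJ => hmax J (Finset.mem_powersetCard.mpr ⟨Finset.subset_univ J, hJ⟩)
  refine ⟨∑ i ∈ I, A i i, ⟨⟨I, hIk, rfl⟩, ?_⟩, ?_, ?_⟩
  · rintro x ⟨J, hJ, rfl⟩
    exact hle J hJ
  · obtain ⟨W, hW, htrace⟩ := exists_feasible_trace_eq_sum_diag hmk hrank hIk
    exact ⟨W, hW, htrace.symm⟩
  · rintro x ⟨W, hW, rfl⟩
    obtain ⟨J, hJ, htrace⟩ := trace_le_sum_diag_of_feasible hkd hA hW
    exact htrace.trans (hle J hJ)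

/-- for a PSD matrix `A` with `rank A ≤ m`, the maximum of `Tr(Wᵀ A W)`
over the FSPCA feasible set `F(d,m,k)` is attained and equals the sum of the `k`
largest diagonal entries of `A` (i.e. the maximum over index sets of cardinality `k`
of the corresponding diagonal sums). -/
theorem fspca_lowrank_global (d m k : ℕ) (hd : 0 < d) (hm : 0 < m) (hmk : m ≤ k)
    (hkd : k ≤ d) (A : Matrix (Fin d) (Fin d) ℝ) (hA : A.PosSemidef)
    (hrank : A.rank ≤ m) :
    ∃ c : ℝ,
      IsGreatest {x : ℝ | ∃ I : Finset (Fin d), I.card = k ∧ x = ∑ i ∈ I, A i i} c ∧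
      IsGreatest {x : ℝ | ∃ W : Matrix (Fin d) (Fin m) ℝ, feasible d m k W ∧
        x = (Wᵀ * A * W).trace} c :=
  fspca_lowrank_global_general d m k hmk hkd A hA hrank
end

section
/- Let d, m, k be positive integers with m ≤ k ≤ d and let A ∈ ℝ^{d×d} be a symmetric positive semidefinite matrix. Then the supremum of Tr(Wᵀ A W) over the FSPCA feasible set F(d,m,k) is attained and equals the maximum, over all index sets I ⊆ {1,…,d} with card(I) = k, of the sum of the m largest eigenvalues of the principal submatrix A_{I,I}. -/
open Matrix

/-- The eigenvalues of a real matrix, sorted in non-increasing order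
(`0` if the matrix is not Hermitian). -/
noncomputable def eigsDesc {n : ℕ} (M : Matrix (Fin n) (Fin n) ℝ) : Fin n → ℝ :=
  if hM : M.IsHermitian then
    fun i => -((fun j => -hM.eigenvalues j) ∘ Tuple.sort fun j => -hM.eigenvalues j) i
  else 0

/-!
Every feasible `W` is supported on some `k`-set `I`, so `W = S_I V` with `V` a `k × m` matrix
with orthonormal columns and `S_I = (1 : Matrix _ _ ℝ).submatrix id e_I` the coordinate embedding
of `ℝ^I`; then `Tr(Wᵀ A W) = Tr(Vᵀ A_{I,I} V)`. Ky Fan's maximum principle bounds this by the sum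
of the `m` largest eigenvalues of `A_{I,I}`, with equality when the columns of `V` are the
corresponding eigenvectors. For Ky Fan: in an orthonormal eigenbasis of `M`,
`Tr(Vᵀ M V) = ∑ λᵢ pᵢ`, where the weights `pᵢ` (squared row norms of an orthonormal frame) lie in
`[0, 1]` and sum to `m`; such a weighted sum is largest when weight `1` sits on the `m` largest
eigenvalues.
-/

open Finset

theorem sum_mul_le_sum_of_threshold {ι : Type*} [Fintype ι] {f q : ι → ℝ} {P : Finset ι}
    {t : ℝ} (hP : ∀ i ∈ P, t ≤ f i) (hPc : ∀ i ∉ P, f i ≤ t)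
    (hq0 : ∀ i, 0 ≤ q i) (hq1 : ∀ i, q i ≤ 1) (hq : ∑ i, q i = #P) :
    ∑ i, f i * q i ≤ ∑ i ∈ P, f i := by
  classical
  have hin : ∑ i ∈ P, (f i - t) * q i ≤ ∑ i ∈ P, (f i - t) := by
    refine sum_le_sum fun i hi => ?_
    nlinarith [hP i hi, hq1 i]
  have hout : ∑ i ∈ Pᶜ, (f i - t) * q i ≤ 0 := by
    refine sum_nonpos fun i hi => ?_
    nlinarith [hPc i (mem_compl.mp hi), hq0 i]
  calc ∑ i, f i * q i = ∑ i ∈ P, (f i - t) * q i + ∑ i ∈ Pᶜ, (f i - t) * q i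
        + t * ∑ i, q i := by
        rw [sum_add_sum_compl, mul_sum, ← sum_add_distrib]
        exact sum_congr rfl fun i _ => by ring
    _ ≤ ∑ i ∈ P, (f i - t) + t * #P := by rw [hq]; linarith
    _ = ∑ i ∈ P, f i := by rw [sum_sub_distrib, sum_const, nsmul_eq_mul]; ring

theorem Antitone.sum_mul_le_sum_castLE {n m : ℕ} (hmn : m ≤ n) {f q : Fin n → ℝ}
    (hf : Antitone f) (hq0 : ∀ i, 0 ≤ q i) (hq1 : ∀ i, q i ≤ 1) (hq : ∑ i, q i = m) :
    ∑ i, f i * q i ≤ ∑ j : Fin m, f (Fin.castLE hmn j) := by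
  set P := univ.map (Fin.castLEEmb hmn)
  have hmemP : ∀ i, i ∈ P ↔ (i : ℕ) < m := fun i => by
    simp only [P, mem_map, mem_univ, true_and, Fin.castLEEmb_apply]
    exact ⟨fun ⟨a, ha⟩ => ha ▸ a.isLt, fun h => ⟨⟨i, h⟩, rfl⟩⟩
  obtain ⟨t, htop, hbot⟩ : ∃ t, (∀ i ∈ P, t ≤ f i) ∧ (∀ i ∉ P, f i ≤ t) := by
    rcases Nat.eq_zero_or_pos m with rfl | hm
    · obtain ⟨t, ht⟩ := (Set.finite_range f).bddAbove
      exact ⟨t, by simp [hmemP], fun i _ => ht ⟨i, rfl⟩⟩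
    · refine ⟨f ⟨m - 1, by omega⟩, fun i hi => hf ?_, fun i hi => hf ?_⟩
      · exact Fin.le_def.2 (by have := (hmemP i).1 hi; dsimp; omega)
      · exact Fin.le_def.2 (by have := (hmemP i).not.1 hi; dsimp; omega)
  have hcard : #P = m := by simp [P]
  rw [← hcard] at hq
  simpa [P] using sum_mul_le_sum_of_threshold htop hbot hq0 hq1 hq

namespace Matrix

section Frame
variable {n m R : Type*} [Fintype n] [Fintype m]

theorem trace_transpose_mul_diagonal_mul [CommSemiring R] [DecidableEq n] (v : n → R)
    (C : Matrix n m R) :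
    (Cᵀ * diagonal v * C).trace = ∑ i, v i * ∑ a, C i a ^ 2 := by
  simp only [trace, diag, mul_apply (M := Cᵀ * diagonal v), mul_diagonal, transpose_apply]
  rw [sum_comm]
  exact sum_congr rfl fun i _ => by rw [mul_sum]; exact sum_congr rfl fun a _ => by ring

variable [DecidableEq m]

theorem sum_sum_sq_eq_card_of_transpose_mul_self [CommSemiring R] {C : Matrix n m R}
    (hC : Cᵀ * C = 1) : ∑ i, ∑ a, C i a ^ 2 = Fintype.card m := by
  classical
  simpa [hC] using (trace_transpose_mul_diagonal_mul 1 C).symm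

theorem sum_sq_le_one_of_transpose_mul_self [CommRing R] [LinearOrder R] [IsStrictOrderedRing R]
    {C : Matrix n m R} (hC : Cᵀ * C = 1) (i : n) :
    ∑ a, C i a ^ 2 ≤ 1 := by
  set P := C * Cᵀ
  have hPsymm : ∀ j l, P j l = P l j := fun j l => by
    simp only [P, mul_apply, transpose_apply, mul_comm]
  have hPidem : P * P = P := by
    simp only [P]; rw [Matrix.mul_assoc, ← Matrix.mul_assoc Cᵀ, hC, Matrix.one_mul]
  have hPii : P i i = ∑ a, C i a ^ 2 := by simp only [P, mul_apply, transpose_apply, sq]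
  have hsq : P i i ^ 2 ≤ P i i := calc
    P i i ^ 2 ≤ ∑ l, P i l ^ 2 := single_le_sum (fun l _ => sq_nonneg (P i l)) (mem_univ i)
    _ = P i i := by
      conv_rhs => rw [← hPidem, mul_apply]
      exact sum_congr rfl fun l _ => by rw [hPsymm l i, sq]
  nlinarith

end Frame

namespace IsHermitian
variable {n : Type*} [Fintype n] [DecidableEq n] {M : Matrix n n ℝ} (hM : M.IsHermitian)

theorem eigenvectorUnitary_transpose_mul_self :
    (hM.eigenvectorUnitary : Matrix n n ℝ)ᵀ * hM.eigenvectorUnitary = 1 :=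
  Unitary.coe_star_mul_self hM.eigenvectorUnitary

theorem eigenvectorUnitary_mul_transpose_self :
    (hM.eigenvectorUnitary : Matrix n n ℝ) * (hM.eigenvectorUnitary : Matrix n n ℝ)ᵀ = 1 :=
  Unitary.coe_mul_star_self hM.eigenvectorUnitary

theorem transpose_eigenvectorUnitary_mul_mul :
    (hM.eigenvectorUnitary : Matrix n n ℝ)ᵀ * M * hM.eigenvectorUnitary
      = diagonal hM.eigenvalues := by
  simpa [Unitary.conjStarAlgAut_apply, star_eq_conjTranspose] using
    hM.conjStarAlgAut_star_eigenvectorUnitary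

end IsHermitian

theorem transpose_submatrix_mul_mul_submatrix {k l n R : Type*} [Fintype l] [CommSemiring R]
    (S : Matrix l n R) (B : Matrix l l R) (e : k → n) :
    (S.submatrix id e)ᵀ * B * S.submatrix id e = (Sᵀ * B * S).submatrix e e := by
  rw [transpose_submatrix, submatrix_mul _ _ e id e Function.bijective_id,
    submatrix_mul _ _ e id id Function.bijective_id]
  rfl

section Selection
variable {l k m R : Type*} [DecidableEq l] [CommSemiring R]

theorem one_submatrix_mul_transpose_mul_mul [Fintype l] [Fintype k] (e : k → l) (V : Matrix k m R)
    (B : Matrix l l R) :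
    ((1 : Matrix l l R).submatrix id e * V)ᵀ * B * ((1 : Matrix l l R).submatrix id e * V)
      = Vᵀ * B.submatrix e e * V := by
  have hconj := transpose_submatrix_mul_mul_submatrix (1 : Matrix l l R) B e
  rw [transpose_one, Matrix.one_mul, Matrix.mul_one] at hconj
  rw [transpose_mul, ← hconj]
  simp only [Matrix.mul_assoc]

theorem one_submatrix_mul_apply_of_notMem_range [Fintype k] (e : k → l) (V : Matrix k m R)
    {i : l} (hi : i ∉ Set.range e) :
    ((1 : Matrix l l R).submatrix id e * V) i = 0 := by
  funext a
  refine sum_eq_zero fun j _ => ?_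
  have hij : i ≠ e j := fun h => hi ⟨j, h.symm⟩
  simp [hij]

theorem one_submatrix_mul_submatrix_of_notMem_range [Fintype l] [Fintype k] {e : k → l}
    (he : Function.Injective e) {W : Matrix l m R} (hW : ∀ i ∉ Set.range e, W i = 0) :
    (1 : Matrix l l R).submatrix id e * W.submatrix e id = W := by
  ext i a
  by_cases hi : i ∈ Set.range e
  · obtain ⟨j, rfl⟩ := hi
    rw [mul_apply, sum_eq_single j]
    · rw [submatrix_apply, id, one_apply_eq, one_mul, submatrix_apply, id]
    · intro j' _ hj'
      rw [submatrix_apply, id, one_apply_ne (he.ne hj').symm, zero_mul]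
    · simp
  · rw [one_submatrix_mul_apply_of_notMem_range e _ hi, hW i hi]

end Selection

end Matrix

section SortedEigenvalues
variable {n : ℕ} {M : Matrix (Fin n) (Fin n) ℝ}

theorem eigsDesc_eq_eigenvalues_comp_sort (hM : M.IsHermitian) :
    eigsDesc M = hM.eigenvalues ∘ Tuple.sort fun j => -hM.eigenvalues j := by
  rw [eigsDesc, dif_pos hM]
  funext i
  simp

theorem antitone_eigsDesc (hM : M.IsHermitian) : Antitone (eigsDesc M) := by
  rw [eigsDesc_eq_eigenvalues_comp_sort hM]
  exact fun i j hij => neg_le_neg_iff.mp (Tuple.monotone_sort (fun j => -hM.eigenvalues j) hij)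

end SortedEigenvalues

section KyFan
variable {n m : ℕ} {M : Matrix (Fin n) (Fin n) ℝ}

theorem trace_transpose_mul_mul_le_sum_eigsDesc (hM : M.IsHermitian) (hmn : m ≤ n)
    {V : Matrix (Fin n) (Fin m) ℝ} (hV : Vᵀ * V = 1) :
    (Vᵀ * M * V).trace ≤ ∑ j : Fin m, eigsDesc M (Fin.castLE hmn j) := by
  set U : Matrix (Fin n) (Fin n) ℝ := ↑hM.eigenvectorUnitary
  set C := Uᵀ * V
  have hUUt : U * Uᵀ = 1 := hM.eigenvectorUnitary_mul_transpose_self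
  have hC : Cᵀ * C = 1 := by
    simp only [C, transpose_mul, transpose_transpose, Matrix.mul_assoc]
    rw [← Matrix.mul_assoc U, hUUt, Matrix.one_mul, hV]
  have hconj : Vᵀ * M * V = Cᵀ * (Uᵀ * M * U) * C := by
    simp only [C, transpose_mul, transpose_transpose, ← Matrix.mul_assoc]
    rw [Matrix.mul_assoc Vᵀ U, hUUt, Matrix.mul_one, Matrix.mul_assoc _ U, hUUt, Matrix.mul_one]
  have htrace : (Vᵀ * M * V).trace = ∑ i, hM.eigenvalues i * ∑ a, C i a ^ 2 := by
    rw [hconj, hM.transpose_eigenvectorUnitary_mul_mul, trace_transpose_mul_diagonal_mul]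
  set σ := Tuple.sort fun j => -hM.eigenvalues j
  have hweights : ∑ i, ∑ a, C (σ i) a ^ 2 = m := by
    rw [Equiv.sum_comp σ (fun i => ∑ a, C i a ^ 2), sum_sum_sq_eq_card_of_transpose_mul_self hC,
      Fintype.card_fin]
  calc (Vᵀ * M * V).trace = ∑ i, hM.eigenvalues i * ∑ a, C i a ^ 2 := htrace
    _ = ∑ i, eigsDesc M i * ∑ a, C (σ i) a ^ 2 := by
      rw [← Equiv.sum_comp σ, eigsDesc_eq_eigenvalues_comp_sort hM]; rfl
    _ ≤ ∑ j : Fin m, eigsDesc M (Fin.castLE hmn j) :=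
      (antitone_eigsDesc hM).sum_mul_le_sum_castLE hmn
        (fun i => sum_nonneg fun a _ => sq_nonneg _)
        (fun i => sum_sq_le_one_of_transpose_mul_self hC _) hweights

theorem exists_trace_transpose_mul_mul_eq_sum_eigsDesc (hM : M.IsHermitian) (hmn : m ≤ n) :
    ∃ V : Matrix (Fin n) (Fin m) ℝ, Vᵀ * V = 1 ∧
      (Vᵀ * M * V).trace = ∑ j : Fin m, eigsDesc M (Fin.castLE hmn j) := by
  set U : Matrix (Fin n) (Fin n) ℝ := ↑hM.eigenvectorUnitary
  set g := (Tuple.sort fun j => -hM.eigenvalues j) ∘ Fin.castLE hmn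
  have hg : Function.Injective g := (Equiv.injective _).comp (Fin.castLE_injective hmn)
  refine ⟨U.submatrix id g, ?_, ?_⟩
  · have := transpose_submatrix_mul_mul_submatrix U 1 g
    rwa [Matrix.mul_one, Matrix.mul_one, hM.eigenvectorUnitary_transpose_mul_self,
      submatrix_one _ hg] at this
  · rw [transpose_submatrix_mul_mul_submatrix, hM.transpose_eigenvectorUnitary_mul_mul,
      submatrix_diagonal _ _ hg, trace_diagonal, eigsDesc_eq_eigenvalues_comp_sort hM]
    rfl

end KyFan


theorem feasible_one_submatrix_mul {d m k : ℕ} {e : Fin k → Fin d} (he : Function.Injective e)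
    {V : Matrix (Fin k) (Fin m) ℝ} (hV : Vᵀ * V = 1) :
    feasible d m k ((1 : Matrix (Fin d) (Fin d) ℝ).submatrix id e * V) := by
  refine ⟨?_, ?_⟩
  · rw [← Matrix.mul_one (_ᵀ), one_submatrix_mul_transpose_mul_mul, submatrix_one _ he,
      Matrix.mul_one, hV]
  · calc _ ≤ (Set.range e).ncard := Set.ncard_le_ncard fun i hi => by
          by_contra hi'; exact hi (one_submatrix_mul_apply_of_notMem_range e V hi')
      _ = k := by rw [Set.ncard_range_of_injective he, Nat.card_eq_fintype_card, Fintype.card_fin]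

theorem exists_eq_one_submatrix_mul_of_feasible {d m k : ℕ} (hkd : k ≤ d)
    {W : Matrix (Fin d) (Fin m) ℝ} (hW : feasible d m k W) :
    ∃ I : Finset (Fin d), ∃ hI : I.card = k, ∃ V : Matrix (Fin k) (Fin m) ℝ, Vᵀ * V = 1 ∧
      W = (1 : Matrix (Fin d) (Fin d) ℝ).submatrix id (I.orderEmbOfFin hI) * V := by
  classical
  have hT := Set.toFinite {i | W i ≠ 0}
  obtain ⟨I, hTI, hI⟩ := Finset.exists_superset_card_eq (s := hT.toFinset) (n := k)
    (by rw [← Set.ncard_eq_toFinset_card _ hT]; exact hW.2) (by simpa using hkd)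
  set e := I.orderEmbOfFin hI
  have hWe : (1 : Matrix (Fin d) (Fin d) ℝ).submatrix id e * W.submatrix e id = W := by
    refine one_submatrix_mul_submatrix_of_notMem_range e.injective fun i hi => ?_
    by_contra hWi
    exact hi (by simpa [e, Finset.range_orderEmbOfFin] using hTI (by simpa using hWi))
  refine ⟨I, hI, W.submatrix e id, ?_, hWe.symm⟩
  have hWW := hW.1
  rwa [← hWe, ← Matrix.mul_one (_ᵀ), one_submatrix_mul_transpose_mul_mul,
    submatrix_one _ e.injective, Matrix.mul_one] at hWW

noncomputable def topEigenvalueSum {d m k : ℕ} (A : Matrix (Fin d) (Fin d) ℝ) (hmk : m ≤ k)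
    (I : Finset (Fin d)) (hI : I.card = k) : ℝ :=
  ∑ j : Fin m, eigsDesc (A.submatrix (I.orderEmbOfFin hI) (I.orderEmbOfFin hI)) (Fin.castLE hmk j)

theorem exists_feasible_trace_eq_topEigenvalueSum {d m k : ℕ} (hmk : m ≤ k)
    {A : Matrix (Fin d) (Fin d) ℝ} (hA : A.IsHermitian) (I : Finset (Fin d)) (hI : I.card = k) :
    ∃ W, feasible d m k W ∧ (Wᵀ * A * W).trace = topEigenvalueSum A hmk I hI := by
  obtain ⟨V, hV, htrace⟩ :=
    exists_trace_transpose_mul_mul_eq_sum_eigsDesc (hA.submatrix (I.orderEmbOfFin hI)) hmk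
  exact ⟨_, feasible_one_submatrix_mul (I.orderEmbOfFin hI).injective hV,
    by rw [one_submatrix_mul_transpose_mul_mul, htrace, topEigenvalueSum]⟩

theorem exists_trace_le_topEigenvalueSum_of_feasible {d m k : ℕ} (hmk : m ≤ k) (hkd : k ≤ d)
    {A : Matrix (Fin d) (Fin d) ℝ} (hA : A.IsHermitian) {W : Matrix (Fin d) (Fin m) ℝ}
    (hW : feasible d m k W) :
    ∃ I : Finset (Fin d), ∃ hI : I.card = k,
      (Wᵀ * A * W).trace ≤ topEigenvalueSum A hmk I hI := by
  obtain ⟨I, hI, V, hV, rfl⟩ := exists_eq_one_submatrix_mul_of_feasible hkd hW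
  refine ⟨I, hI, ?_⟩
  rw [one_submatrix_mul_transpose_mul_mul]
  exact trace_transpose_mul_mul_le_sum_eigsDesc (hA.submatrix _) hmk hV

theorem fspca_combinatorial_characterization_general (d m k : ℕ)
    (hmk : m ≤ k) (hkd : k ≤ d)
    (A : Matrix (Fin d) (Fin d) ℝ) (hA : A.PosSemidef) :
    ∃ c : ℝ,
      IsGreatest {x : ℝ | ∃ I : Finset (Fin d), ∃ hI : I.card = k,
        x = ∑ j : Fin m, eigsDesc
          (A.submatrix (I.orderEmbOfFin hI) (I.orderEmbOfFin hI)) (Fin.castLE hmk j)} c ∧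
      IsGreatest {x : ℝ | ∃ W : Matrix (Fin d) (Fin m) ℝ, feasible d m k W ∧
        x = (Wᵀ * A * W).trace} c := by
  set S := {x : ℝ | ∃ I : Finset (Fin d), ∃ hI : I.card = k, x = topEigenvalueSum A hmk I hI}
  have hfin : S.Finite :=
    ((Set.toFinite {I : Finset (Fin d) | I.card = k}).dependent_image
      (topEigenvalueSum A hmk)).subset fun _ ⟨I, hI, hx⟩ => ⟨I, hI, hx.symm⟩
  have hne : S.Nonempty := by
    obtain ⟨I, -, hI⟩ := (univ : Finset (Fin d)).exists_subset_card_eq (by simpa using hkd)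
    exact ⟨_, I, hI, rfl⟩
  obtain ⟨c, hcS, hc⟩ := Set.exists_max_image S id hfin hne
  refine ⟨c, ⟨hcS, hc⟩, ?_, ?_⟩
  · obtain ⟨I, hI, rfl⟩ := hcS
    obtain ⟨W, hW, htrace⟩ := exists_feasible_trace_eq_topEigenvalueSum hmk hA.isHermitian I hI
    exact ⟨W, hW, htrace.symm⟩
  · rintro _ ⟨W, hW, rfl⟩
    obtain ⟨I, hI, hle⟩ := exists_trace_le_topEigenvalueSum_of_feasible hmk hkd hA.isHermitian hW
    exact hle.trans (hc _ ⟨I, hI, rfl⟩)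

/-- for a PSD matrix `A`, the supremum of `Tr(Wᵀ A W)` over `F(d,m,k)`
is attained and equals the maximum over index sets `I` of cardinality `k` of the
sum of the `m` largest eigenvalues of the principal submatrix `A_{I,I}`. -/
theorem fspca_combinatorial_characterization (d m k : ℕ) (hd : 0 < d) (hm : 0 < m)
    (hmk : m ≤ k) (hkd : k ≤ d)
    (A : Matrix (Fin d) (Fin d) ℝ) (hA : A.PosSemidef) :
    ∃ c : ℝ,
      IsGreatest {x : ℝ | ∃ I : Finset (Fin d), ∃ hI : I.card = k,
        x = ∑ j : Fin m, eigsDesc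
          (A.submatrix (I.orderEmbOfFin hI) (I.orderEmbOfFin hI)) (Fin.castLE hmk j)} c ∧
      IsGreatest {x : ℝ | ∃ W : Matrix (Fin d) (Fin m) ℝ, feasible d m k W ∧
        x = (Wᵀ * A * W).trace} c :=
  fspca_combinatorial_characterization_general d m k hmk hkd A hA
end

section
/- Let A ∈ ℝ^{d×d} be symmetric positive semidefinite, let W ∈ ℝ^{d×m}, and define the proxy matrix P = A W (Wᵀ A W)† Wᵀ A. Then for every W̃ ∈ ℝ^{d×m} with W̃ᵀ W̃ = I_m, it holds that Tr(W̃ᵀ P W̃) ≤ Tr(W̃ᵀ A W̃). -/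
/-!
Write `A = Rᴴ R` and `C = R W`, so that `Wᴴ A W = Cᴴ C`. For any generalized inverse `G` of
`Cᴴ C` the matrix `P = C G Cᴴ` is the orthogonal projection onto the range of `C`, hence
`1 - P ⪰ 0`, and `A - A W G Wᴴ A = Rᴴ (1 - P) R ⪰ 0`. Compressing this gap by `W̃` and taking
traces gives the inequality.
-/

open Matrix
open scoped ComplexOrder

namespace Matrix

variable {m n p R : Type*} [Fintype m] [Fintype n]

section StarOrderedRing

variable [CommRing R] [PartialOrder R] [StarRing R] [StarOrderedRing R] [NoZeroDivisors R]

theorem mul_eq_mul_of_conjTranspose_mul_self_mul_eq {C : Matrix n m R} {X Y : Matrix m p R}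
    (h : Cᴴ * C * X = Cᴴ * C * Y) : C * X = C * Y := by
  rw [← sub_eq_zero, ← Matrix.mul_sub, ← conjTranspose_mul_self_mul_eq_zero, Matrix.mul_sub, h,
    sub_self]

variable [DecidableEq m]

theorem mul_mul_conjTranspose_mul_self_of_gInv {C : Matrix n m R} {G : Matrix m m R}
    (hG : Cᴴ * C * G * (Cᴴ * C) = Cᴴ * C) : C * G * (Cᴴ * C) = C := by
  simpa only [Matrix.mul_assoc, Matrix.mul_one] using
    mul_eq_mul_of_conjTranspose_mul_self_mul_eq (X := G * (Cᴴ * C)) (Y := 1)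
      (by simpa only [Matrix.mul_assoc, Matrix.mul_one] using hG)

theorem posSemidef_one_sub_mul_mul_conjTranspose_of_gInv [DecidableEq n] {C : Matrix n m R}
    {G : Matrix m m R} (hG : Cᴴ * C * G * (Cᴴ * C) = Cᴴ * C) : (1 - C * G * Cᴴ).PosSemidef := by
  set P := C * G * Cᴴ
  have hCGstar : C * Gᴴ * (Cᴴ * C) = C := by
    refine mul_mul_conjTranspose_mul_self_of_gInv ?_
    simpa only [conjTranspose_mul, conjTranspose_conjTranspose, Matrix.mul_assoc] using
      congrArg conjTranspose hG
  have hP : Pᴴ * P = P := by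
    calc Pᴴ * P = C * Gᴴ * (Cᴴ * C) * G * Cᴴ := by
          simp only [P, conjTranspose_mul, conjTranspose_conjTranspose, Matrix.mul_assoc]
      _ = P := by rw [hCGstar]
  have hPsymm : Pᴴ = P := by rw [← hP, conjTranspose_mul, conjTranspose_conjTranspose]
  have hidem : P * P = P := by
    calc P * P = Pᴴ * P := by rw [hPsymm]
      _ = P := hP
  have hgap : (1 - P)ᴴ * (1 - P) = 1 - P := by
    rw [conjTranspose_sub, conjTranspose_one, hPsymm, Matrix.sub_mul, Matrix.mul_sub,
      Matrix.mul_sub, hidem]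
    simp
  rw [← hgap]
  exact posSemidef_conjTranspose_mul_self _

end StarOrderedRing

theorem PosSemidef.sub_mul_mul_conjTranspose_mul_of_gInv {𝕜 : Type*} [RCLike 𝕜] [DecidableEq m]
    [DecidableEq n] {A : Matrix n n 𝕜} (hA : A.PosSemidef) {W : Matrix n m 𝕜}
    {G : Matrix m m 𝕜} (hG : Wᴴ * A * W * G * (Wᴴ * A * W) = Wᴴ * A * W) :
    (A - A * W * G * Wᴴ * A).PosSemidef := by
  open scoped MatrixOrder in
  obtain ⟨R, rfl⟩ := CStarAlgebra.nonneg_iff_eq_star_mul_self.mp hA.nonneg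
  rw [star_eq_conjTranspose] at hG ⊢
  have hB : Wᴴ * (Rᴴ * R) * W = (R * W)ᴴ * (R * W) := by
    simp only [conjTranspose_mul, Matrix.mul_assoc]
  rw [hB] at hG
  have hfactor : Rᴴ * R - Rᴴ * R * W * G * Wᴴ * (Rᴴ * R)
      = Rᴴ * (1 - R * W * G * (R * W)ᴴ) * R := by
    simp only [conjTranspose_mul, Matrix.mul_sub, Matrix.sub_mul, Matrix.mul_one, Matrix.mul_assoc]
  rw [hfactor]
  exact (posSemidef_one_sub_mul_mul_conjTranspose_of_gInv hG).conjTranspose_mul_mul_same R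

end Matrix

theorem proxy_minorizes_general (d m : ℕ) (A : Matrix (Fin d) (Fin d) ℝ) (hA : A.PosSemidef)
    (W : Matrix (Fin d) (Fin m) ℝ)
    (Bd : Matrix (Fin m) (Fin m) ℝ)
    (h1 : (Wᵀ * A * W) * Bd * (Wᵀ * A * W) = Wᵀ * A * W) :
    ∀ Wt : Matrix (Fin d) (Fin m) ℝ, Wtᵀ * Wt = 1 →
      (Wtᵀ * (A * W * Bd * Wᵀ * A) * Wt).trace ≤ (Wtᵀ * A * Wt).trace := by
  intro Wt _
  have hgap : (A - A * W * Bd * Wᵀ * A).PosSemidef := by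
    simpa only [conjTranspose_eq_transpose_of_trivial] using
      hA.sub_mul_mul_conjTranspose_mul_of_gInv (W := W) (G := Bd)
        (by simpa only [conjTranspose_eq_transpose_of_trivial] using h1)
  have htrace := (hgap.conjTranspose_mul_mul_same Wt).trace_nonneg
  rw [conjTranspose_eq_transpose_of_trivial, Matrix.mul_sub, Matrix.sub_mul, trace_sub] at htrace
  linarith

/-- if `A` is PSD and `Bd` is the Moore–Penrose pseudoinverse of
`Wᵀ A W`, then for every `W̃` with `W̃ᵀ W̃ = I_m` the proxy
`P = A W (Wᵀ A W)† Wᵀ A` satisfies `Tr(W̃ᵀ P W̃) ≤ Tr(W̃ᵀ A W̃)`. -/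
theorem proxy_minorizes (d m : ℕ) (A : Matrix (Fin d) (Fin d) ℝ) (hA : A.PosSemidef)
    (W : Matrix (Fin d) (Fin m) ℝ)
    (Bd : Matrix (Fin m) (Fin m) ℝ)
    (h1 : (Wᵀ * A * W) * Bd * (Wᵀ * A * W) = Wᵀ * A * W)
    (h2 : Bd * (Wᵀ * A * W) * Bd = Bd)
    (h3 : ((Wᵀ * A * W) * Bd)ᵀ = (Wᵀ * A * W) * Bd)
    (h4 : (Bd * (Wᵀ * A * W))ᵀ = Bd * (Wᵀ * A * W)) :
    ∀ Wt : Matrix (Fin d) (Fin m) ℝ, Wtᵀ * Wt = 1 →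
      (Wtᵀ * (A * W * Bd * Wᵀ * A) * Wt).trace ≤ (Wtᵀ * A * Wt).trace :=
  proxy_minorizes_general d m A hA W Bd h1
end

section
/- Let d, m, k be positive integers with m ≤ k ≤ d, let A ∈ ℝ^{d×d} be symmetric positive semidefinite, and let W_t belong to the FSPCA feasible set F(d,m,k). Define the proxy matrix P_t = A W_t (W_tᵀ A W_t)† W_tᵀ A, and let W̃ ∈ F(d,m,k) be any maximizer of Tr(Wᵀ P_t W) over F(d,m,k). Then Tr(W_tᵀ A W_t) ≤ Tr(W̃ᵀ A W̃). Moreover, if I is the set of indices of nonzero rows of W̃ (so card(I) ≤ k) and W_{t+1} ∈ F(d,m,k) maximizes Tr(Wᵀ A W) over the matrices in F(d,m,k) whose nonzero rows are contained in I, then Tr(W_tᵀ A W_t) ≤ Tr(W_{t+1}ᵀ A W_{t+1}). -/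
open Matrix

namespace Matrix
open scoped ComplexOrder

variable {𝕜 : Type*} [RCLike 𝕜] {m n : Type*} [Fintype m] [Fintype n]

theorem mul_mul_conjTranspose_mul_self_eq_self {M : Matrix m n 𝕜} {B : Matrix n n 𝕜}
    (hB : Mᴴ * M * B * (Mᴴ * M) = Mᴴ * M) : M * B * (Mᴴ * M) = M := by
  have hE : (M * B * (Mᴴ * M) - M)ᴴ * M = 0 := by
    have := congrArg conjTranspose hB
    simp only [conjTranspose_mul, conjTranspose_conjTranspose, Matrix.mul_assoc] at this
    simp only [conjTranspose_sub, conjTranspose_mul, conjTranspose_conjTranspose, Matrix.sub_mul,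
      Matrix.mul_assoc, this, sub_self]
  rw [← sub_eq_zero, ← conjTranspose_mul_self_eq_zero]
  calc (M * B * (Mᴴ * M) - M)ᴴ * (M * B * (Mᴴ * M) - M)
      = (M * B * (Mᴴ * M) - M)ᴴ * M * (B * (Mᴴ * M)) - (M * B * (Mᴴ * M) - M)ᴴ * M := by
        rw [Matrix.mul_sub, Matrix.mul_assoc _ M, Matrix.mul_assoc M]
    _ = 0 := by rw [hE, Matrix.zero_mul, sub_zero]

theorem posSemidef_one_sub_mul_mul_conjTranspose [DecidableEq m] {M : Matrix m n 𝕜}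
    {B : Matrix n n 𝕜} (hB : Mᴴ * M * B * (Mᴴ * M) = Mᴴ * M) :
    (1 - M * B * Mᴴ).PosSemidef := by
  have hQ : M * B * Mᴴ * (M * B * Mᴴ)ᴴ = (M * B * Mᴴ)ᴴ := by
    calc M * B * Mᴴ * (M * B * Mᴴ)ᴴ = M * B * (Mᴴ * M) * Bᴴ * Mᴴ := by
          simp only [conjTranspose_mul, conjTranspose_conjTranspose, Matrix.mul_assoc]
      _ = (M * B * Mᴴ)ᴴ := by
          rw [mul_mul_conjTranspose_mul_self_eq_self hB]
          simp only [conjTranspose_mul, conjTranspose_conjTranspose, Matrix.mul_assoc]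
  have hsq : (1 - M * B * Mᴴ) * (1 - M * B * Mᴴ)ᴴ = 1 - M * B * Mᴴ := by
    rw [conjTranspose_sub, conjTranspose_one, Matrix.mul_sub, Matrix.sub_mul, Matrix.sub_mul, hQ]
    simp only [Matrix.one_mul, Matrix.mul_one]
    abel
  rw [← hsq]
  exact posSemidef_self_mul_conjTranspose _

open scoped MatrixOrder in
theorem PosSemidef.sub_mul_mul_conjTranspose_mul [DecidableEq m] {A : Matrix m m 𝕜}
    (hA : A.PosSemidef) {W : Matrix m n 𝕜} {B : Matrix n n 𝕜}
    (hB : Wᴴ * A * W * B * (Wᴴ * A * W) = Wᴴ * A * W) :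
    (A - A * W * B * Wᴴ * A).PosSemidef := by
  set S := CFC.sqrt A
  have hSS : Sᴴ * S = A := by
    rw [(CFC.sqrt_nonneg A).posSemidef.isHermitian.eq, CFC.sqrt_mul_sqrt_self A hA.nonneg]
  have hM : (S * W)ᴴ * (S * W) = Wᴴ * A * W := by
    rw [← hSS]; simp only [conjTranspose_mul, Matrix.mul_assoc]
  have key := (posSemidef_one_sub_mul_mul_conjTranspose (hM ▸ hB)).conjTranspose_mul_mul_same S
  convert key using 1
  rw [← hSS]
  simp only [conjTranspose_mul, Matrix.mul_sub, Matrix.sub_mul, Matrix.mul_one, Matrix.mul_assoc]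

theorem trace_conjTranspose_mul_mul_le {A P : Matrix m m 𝕜} (h : (A - P).PosSemidef)
    (W : Matrix m n 𝕜) : (Wᴴ * P * W).trace ≤ (Wᴴ * A * W).trace := by
  have := (h.conjTranspose_mul_mul_same W).trace_nonneg
  rwa [Matrix.mul_sub, Matrix.sub_mul, trace_sub, sub_nonneg] at this

end Matrix

theorem ipu_ascent_general (d m k : ℕ)
    (A : Matrix (Fin d) (Fin d) ℝ) (hA : A.PosSemidef)
    (Wt : Matrix (Fin d) (Fin m) ℝ) (hWt : feasible d m k Wt)
    (Bd : Matrix (Fin m) (Fin m) ℝ)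
    (h1 : (Wtᵀ * A * Wt) * Bd * (Wtᵀ * A * Wt) = Wtᵀ * A * Wt)
    (P : Matrix (Fin d) (Fin d) ℝ) (hP : P = A * Wt * Bd * Wtᵀ * A)
    (Wtl : Matrix (Fin d) (Fin m) ℝ) (hWtl : feasible d m k Wtl)
    (hWtlmax : ∀ W : Matrix (Fin d) (Fin m) ℝ, feasible d m k W →
      (Wᵀ * P * W).trace ≤ (Wtlᵀ * P * Wtl).trace) :
    (Wtᵀ * A * Wt).trace ≤ (Wtlᵀ * A * Wtl).trace ∧
    ∀ Wn : Matrix (Fin d) (Fin m) ℝ, feasible d m k Wn →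
      {i | Wn i ≠ 0} ⊆ {i | Wtl i ≠ 0} →
      (∀ W : Matrix (Fin d) (Fin m) ℝ, feasible d m k W →
        {i | W i ≠ 0} ⊆ {i | Wtl i ≠ 0} →
        (Wᵀ * A * W).trace ≤ (Wnᵀ * A * Wn).trace) →
      (Wtᵀ * A * Wt).trace ≤ (Wnᵀ * A * Wn).trace := by
  have hAP : (A - P).PosSemidef := by
    rw [hP, ← conjTranspose_eq_transpose_of_trivial]
    exact hA.sub_mul_mul_conjTranspose_mul (by simpa only [conjTranspose_eq_transpose_of_trivial])
  have hPW : ∀ W : Matrix (Fin d) (Fin m) ℝ, (Wᵀ * P * W).trace ≤ (Wᵀ * A * W).trace := by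
    simpa only [conjTranspose_eq_transpose_of_trivial] using trace_conjTranspose_mul_mul_le hAP
  have hPWt : (Wtᵀ * P * Wt).trace = (Wtᵀ * A * Wt).trace := by
    rw [hP, ← h1]; simp only [Matrix.mul_assoc]
  have ascent : (Wtᵀ * A * Wt).trace ≤ (Wtlᵀ * A * Wtl).trace :=
    hPWt ▸ (hWtlmax Wt hWt).trans (hPW Wtl)
  exact ⟨ascent, fun Wn _ _ hWnmax => ascent.trans (hWnmax Wtl hWtl subset_rfl)⟩

/-- ascent step of IPU: let `Wt ∈ F(d,m,k)`, let `Bd` be the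
Moore–Penrose pseudoinverse of `Wtᵀ A Wt`, and let `P = A Wt (Wtᵀ A Wt)† Wtᵀ A`.
If `Wtl ∈ F(d,m,k)` maximizes `Tr(Wᵀ P W)` over `F(d,m,k)`, then
`Tr(Wtᵀ A Wt) ≤ Tr(Wtlᵀ A Wtl)`; moreover, any `Wn ∈ F(d,m,k)` whose nonzero
rows are contained in those of `Wtl` and which maximizes `Tr(Wᵀ A W)` among such
matrices also satisfies `Tr(Wtᵀ A Wt) ≤ Tr(Wnᵀ A Wn)`. -/
theorem ipu_ascent (d m k : ℕ) (hm : 0 < m) (hmk : m ≤ k) (hkd : k ≤ d)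
    (A : Matrix (Fin d) (Fin d) ℝ) (hA : A.PosSemidef)
    (Wt : Matrix (Fin d) (Fin m) ℝ) (hWt : feasible d m k Wt)
    (Bd : Matrix (Fin m) (Fin m) ℝ)
    (h1 : (Wtᵀ * A * Wt) * Bd * (Wtᵀ * A * Wt) = Wtᵀ * A * Wt)
    (h2 : Bd * (Wtᵀ * A * Wt) * Bd = Bd)
    (h3 : ((Wtᵀ * A * Wt) * Bd)ᵀ = (Wtᵀ * A * Wt) * Bd)
    (h4 : (Bd * (Wtᵀ * A * Wt))ᵀ = Bd * (Wtᵀ * A * Wt))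
    (P : Matrix (Fin d) (Fin d) ℝ) (hP : P = A * Wt * Bd * Wtᵀ * A)
    (Wtl : Matrix (Fin d) (Fin m) ℝ) (hWtl : feasible d m k Wtl)
    (hWtlmax : ∀ W : Matrix (Fin d) (Fin m) ℝ, feasible d m k W →
      (Wᵀ * P * W).trace ≤ (Wtlᵀ * P * Wtl).trace) :
    (Wtᵀ * A * Wt).trace ≤ (Wtlᵀ * A * Wtl).trace ∧
    ∀ Wn : Matrix (Fin d) (Fin m) ℝ, feasible d m k Wn →
      {i | Wn i ≠ 0} ⊆ {i | Wtl i ≠ 0} →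
      (∀ W : Matrix (Fin d) (Fin m) ℝ, feasible d m k W →
        {i | W i ≠ 0} ⊆ {i | Wtl i ≠ 0} →
        (Wᵀ * A * W).trace ≤ (Wnᵀ * A * Wn).trace) →
      (Wtᵀ * A * Wt).trace ≤ (Wnᵀ * A * Wn).trace :=
  ipu_ascent_general d m k A hA Wt hWt Bd h1 P hP Wtl hWtl hWtlmax
end

section
/- Let d, m, k be positive integers with m ≤ k ≤ d, let A ∈ ℝ^{d×d} be symmetric positive semidefinite with Tr(A) > 0, and let A_m be its best rank-m approximation obtained by truncating the spectral decomposition. Let W_m ∈ F(d,m,k) be a maximizer of Tr(Wᵀ A_m W) over F(d,m,k) and let W_* ∈ F(d,m,k) be a maximizer of Tr(Wᵀ A W) over F(d,m,k). Then (1 − ε) · Tr(W_*ᵀ A W_*) ≤ Tr(W_mᵀ A W_m) ≤ Tr(W_*ᵀ A W_*), where ε = min{ d·G₁/k, d·G₂/m }, with r = min{rank(A), 2m}, G₁ = (∑_{i=m+1}^{r} λ_i(A)) / (∑_{i=1}^{m} λ_i(A)), and G₂ = (∑_{i=m+1}^{r} λ_i(A)) / (∑_{i=1}^{d} λ_i(A)).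 -/
/-! Write `sᵢ = ‖Wᵀ uᵢ‖²`. Then `Tr(Wᵀ A W) = ∑ μᵢ sᵢ` and `Tr(Wᵀ Aₘ W) = ∑_{i<m} μᵢ sᵢ`, where
`0 ≤ sᵢ ≤ 1` and `∑ sᵢ = m` for orthonormal `W`. Hence
`Tr(Wₘᵀ A Wₘ) ≥ Tr(Wₘᵀ Aₘ Wₘ) ≥ Tr(W*ᵀ Aₘ W*) = OPT - ∑_{i≥m} μᵢ sᵢ(W*)`, and an exchange
argument bounds the tail by `∑_{m≤i<r} μᵢ`: the `μᵢ` vanish from `rank A` on, and past `2m` the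
tail carries weight at most `m`, which is better spent on the indices `m ≤ i < 2m`.

It remains to see `k Tr Aₘ ≤ d OPT` and `m Tr A ≤ d OPT`. Averaging over cyclic shifts gives `k`
(resp. `m`) coordinates carrying at least a `k/d` (resp. `m/d`) share of the diagonal. The principal
submatrix of `Aₘ` (resp. `A`) on them has rank at most `m`, so its top `m` eigenvectors, extended
by zero, form a feasible `W` that captures its whole trace. -/

open Matrix Finset

section Spectral

variable {n R : Type*} [Fintype n] [DecidableEq n]

theorem sum_smul_vecMulVec_self_eq [CommSemiring R] (u : n → n → R) (μ : n → R) :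
    ∑ i, μ i • vecMulVec (u i) (u i) = (of u)ᵀ * diagonal μ * of u := by
  ext a b
  simp only [Matrix.sum_apply, Matrix.smul_apply, vecMulVec_apply, smul_eq_mul, mul_apply,
    transpose_apply, of_apply, diagonal_apply, mul_ite, mul_zero, sum_ite_eq', mem_univ, if_true]
  exact sum_congr rfl fun i _ => by ring

theorem of_mul_transpose_eq_one [CommSemiring R] {u : n → n → R}
    (hu : ∀ i j, u i ⬝ᵥ u j = if i = j then 1 else 0) : of u * (of u)ᵀ = 1 := by
  ext i j
  simpa [mul_apply, one_apply, dotProduct] using hu i j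

theorem sum_vecMulVec_self_eq_one [CommRing R] {u : n → n → R}
    (hu : ∀ i j, u i ⬝ᵥ u j = if i = j then 1 else 0) : ∑ i, vecMulVec (u i) (u i) = 1 := by
  have h := sum_smul_vecMulVec_self_eq u 1
  simp only [Pi.one_apply, one_smul] at h
  rw [h, show diagonal (1 : n → R) = 1 from diagonal_one, Matrix.mul_one,
    mul_eq_one_comm.mp (of_mul_transpose_eq_one hu)]

theorem rank_sum_smul_vecMulVec_self [Field R] [DecidableEq R] {u : n → n → R}
    (hu : ∀ i j, u i ⬝ᵥ u j = if i = j then 1 else 0) (μ : n → R) :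
    (∑ i, μ i • vecMulVec (u i) (u i)).rank = Fintype.card {i // μ i ≠ 0} := by
  have hU : of u * (of u)ᵀ = 1 := of_mul_transpose_eq_one hu
  have hdet : IsUnit (of u).det := isUnit_det_of_right_inverse hU
  have hdetT : IsUnit (of u)ᵀ.det := by rwa [det_transpose]
  rw [sum_smul_vecMulVec_self_eq, rank_mul_eq_left_of_isUnit_det _ _ hdet,
    rank_mul_eq_right_of_isUnit_det _ _ hdetT, rank_diagonal]

theorem nonneg_of_posSemidef_sum_smul_vecMulVec_self {u : n → n → ℝ}
    (hu : ∀ i j, u i ⬝ᵥ u j = if i = j then 1 else 0) {μ : n → ℝ}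
    (hA : (∑ i, μ i • vecMulVec (u i) (u i)).PosSemidef) (i : n) : 0 ≤ μ i := by
  have hU : of u * (of u)ᵀ = 1 := of_mul_transpose_eq_one hu
  have hD : of u * (∑ i, μ i • vecMulVec (u i) (u i)) * (of u)ᵀ = diagonal μ := by
    rw [sum_smul_vecMulVec_self_eq, ← Matrix.mul_assoc, ← Matrix.mul_assoc, hU,
      Matrix.one_mul, Matrix.mul_assoc, hU, Matrix.mul_one]
  have := hA.mul_mul_conjTranspose_same (of u)
  rw [conjTranspose_eq_transpose_of_trivial, hD, posSemidef_diagonal_iff] at this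
  exact this i

end Spectral

section Weights

variable {n p ι R : Type*} [Fintype n] [Fintype p]

theorem trace_transpose_mul_sum_smul_vecMulVec_mul [CommSemiring R] (s : Finset ι)
    (μ : ι → R) (u : ι → n → R) (W : Matrix n p R) :
    (Wᵀ * (∑ i ∈ s, μ i • vecMulVec (u i) (u i)) * W).trace
      = ∑ i ∈ s, μ i * (Wᵀ *ᵥ u i) ⬝ᵥ (Wᵀ *ᵥ u i) := by
  rw [Matrix.mul_sum, Matrix.sum_mul, trace_sum]
  refine sum_congr rfl fun i _ => ?_
  rw [Matrix.mul_smul, Matrix.smul_mul, trace_smul, mul_vecMulVec, vecMulVec_mul,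
    trace_vecMulVec, ← mulVec_transpose, smul_eq_mul]

theorem dotProduct_transpose_mulVec_self_le [DecidableEq p] {W : Matrix n p ℝ} (hW : Wᵀ * W = 1)
    (x : n → ℝ) :
    (Wᵀ *ᵥ x) ⬝ᵥ (Wᵀ *ᵥ x) ≤ x ⬝ᵥ x := by
  set y := Wᵀ *ᵥ x
  have hxy : x ⬝ᵥ (W *ᵥ y) = y ⬝ᵥ y := by
    rw [dotProduct_mulVec, ← mulVec_transpose]
  have hyy : (W *ᵥ y) ⬝ᵥ (W *ᵥ y) = y ⬝ᵥ y := by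
    rw [dotProduct_mulVec, ← mulVec_transpose, mulVec_mulVec, hW, one_mulVec, dotProduct_comm]
  have := dotProduct_star_self_nonneg (x - W *ᵥ y)
  simp only [star_trivial, sub_dotProduct, dotProduct_sub, hxy, hyy,
    dotProduct_comm (W *ᵥ y) x] at this
  linarith

theorem sum_dotProduct_transpose_mulVec_self [DecidableEq n] [DecidableEq p] {u : n → n → ℝ}
    (hu : ∀ i j, u i ⬝ᵥ u j = if i = j then 1 else 0) {W : Matrix n p ℝ} (hW : Wᵀ * W = 1) :
    ∑ i, (Wᵀ *ᵥ u i) ⬝ᵥ (Wᵀ *ᵥ u i) = Fintype.card p := by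
  have h := trace_transpose_mul_sum_smul_vecMulVec_mul univ 1 u W
  simp only [Pi.one_apply, one_smul, one_mul, sum_vecMulVec_self_eq_one hu, Matrix.mul_one,
    hW, trace_one] at h
  exact h.symm

end Weights

theorem sum_mul_add_sum_mul_le_sum {ι : Type*} (P Q : Finset ι) {μ s : ι → ℝ} {c : ℝ}
    (hP : ∀ i ∈ P, c ≤ μ i) (hQ : ∀ i ∈ Q, μ i ≤ c) (hs1 : ∀ i ∈ P, s i ≤ 1)
    (hs0 : ∀ i ∈ Q, 0 ≤ s i) (hbudget : c * ∑ i ∈ Q, s i ≤ c * ∑ i ∈ P, (1 - s i)) :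
    ∑ i ∈ P, μ i * s i + ∑ i ∈ Q, μ i * s i ≤ ∑ i ∈ P, μ i :=
  calc ∑ i ∈ P, μ i * s i + ∑ i ∈ Q, μ i * s i
      ≤ ∑ i ∈ P, μ i * s i + ∑ i ∈ P, c * (1 - s i) := by
        rw [← mul_sum]
        gcongr
        refine le_trans (sum_le_sum fun i hi => ?_) (by rw [← mul_sum]; exact hbudget)
        exact mul_le_mul_of_nonneg_right (hQ i hi) (hs0 i hi)
    _ ≤ ∑ i ∈ P, μ i * s i + ∑ i ∈ P, μ i * (1 - s i) := by
        gcongr with i hi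
        · linarith [hs1 i hi]
        · exact hP i hi
    _ = ∑ i ∈ P, μ i := by rw [← sum_add_distrib]; exact sum_congr rfl fun i _ => by ring

theorem Fin.card_filter_le_and_lt {d a b : ℕ} (hb : b ≤ d) :
    #(univ.filter (fun i : Fin d => a ≤ (i : ℕ) ∧ (i : ℕ) < b)) = b - a := by
  rw [← Nat.card_Ico, ← card_map Fin.valEmbedding]
  congr 1
  ext j
  simp only [mem_map, mem_filter, mem_univ, true_and, Fin.valEmbedding_apply, mem_Ico]
  exact ⟨fun ⟨i, hi, hij⟩ => hij ▸ hi, fun hj => ⟨⟨j, by omega⟩, hj, rfl⟩⟩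

theorem sum_filter_le_mul_le_sum_filter_lt_min {d m ρ : ℕ} {μ s : Fin d → ℝ} (hμ : Antitone μ)
    (hμ0 : ∀ i, 0 ≤ μ i) (hρ : ∀ i : Fin d, ρ ≤ (i : ℕ) → μ i = 0)
    (hs0 : ∀ i, 0 ≤ s i) (hs1 : ∀ i, s i ≤ 1) (hs : ∑ i, s i ≤ m) :
    ∑ i ∈ univ.filter (fun i : Fin d => m ≤ (i : ℕ)), μ i * s i
      ≤ ∑ i ∈ univ.filter (fun i : Fin d => m ≤ (i : ℕ) ∧ (i : ℕ) < min ρ (2 * m)), μ i := by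
  set r := min ρ (2 * m)
  have hS : ∑ i ∈ univ.filter (fun i : Fin d => m ≤ (i : ℕ)), s i ≤ m :=
    (sum_le_sum_of_subset_of_nonneg (subset_univ _) fun i _ _ => hs0 i).trans hs
  rw [← sum_filter_add_sum_filter_not _ (fun i : Fin d => (i : ℕ) < r), filter_filter] at hS ⊢
  set P := univ.filter (fun i : Fin d => m ≤ (i : ℕ) ∧ (i : ℕ) < r)
  set Q := (univ.filter (fun i : Fin d => m ≤ (i : ℕ))).filter fun i : Fin d => ¬ (i : ℕ) < r
  -- the threshold is `μ (2m)` if the cut is at `2m < ρ`, and `0` otherwise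
  by_cases hcut : 2 * m < ρ ∧ 2 * m < d
  · have hr : r = 2 * m := min_eq_right hcut.1.le
    set t : Fin d := ⟨2 * m, hcut.2⟩
    refine sum_mul_add_sum_mul_le_sum P Q (c := μ t) (fun i hi => hμ ?_) (fun i hi => hμ ?_)
      (fun i _ => hs1 i) (fun i _ => hs0 i) (mul_le_mul_of_nonneg_left ?_ (hμ0 t))
    · simp only [P, mem_filter] at hi; exact Fin.mk_le_mk.mpr (by omega)
    · simp only [Q, mem_filter] at hi; exact Fin.mk_le_mk.mpr (by omega)
    have hcard : (#P : ℝ) = m := by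
      rw [Fin.card_filter_le_and_lt (by omega), hr, Nat.two_mul, Nat.add_sub_cancel]
    rw [sum_sub_distrib, sum_const, nsmul_one, hcard]
    linarith
  · refine sum_mul_add_sum_mul_le_sum P Q (c := 0) (fun i _ => hμ0 i) (fun i hi => ?_)
      (fun i _ => hs1 i) (fun i _ => hs0 i) (by simp)
    simp only [Q, mem_filter] at hi
    exact (hρ i (by omega)).le

theorem Antitone.eq_zero_of_card_ne_zero_le {d : ℕ} {μ : Fin d → ℝ} (hμ : Antitone μ)
    (hμ0 : ∀ i, 0 ≤ μ i) {i : Fin d} (hi : Fintype.card {j // μ j ≠ 0} ≤ i) : μ i = 0 := by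
  by_contra hne
  have hsub : Iic i ⊆ univ.filter fun j => μ j ≠ 0 := fun j hj => by
    have := hμ (mem_Iic.mp hj)
    simp only [mem_filter, mem_univ, true_and]
    exact (lt_of_lt_of_le ((hμ0 i).lt_of_ne' hne) this).ne'
  have := card_le_card hsub
  rw [Fin.card_Iic, ← Fintype.card_subtype] at this
  omega

theorem Antitone.sum_filter_lt_pos {d m : ℕ} {μ : Fin d → ℝ} (hμ : Antitone μ)
    (hμ0 : ∀ i, 0 ≤ μ i) (hm : 0 < m) (hpos : 0 < ∑ i, μ i) :
    0 < ∑ i ∈ univ.filter (fun i : Fin d => (i : ℕ) < m), μ i := by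
  obtain ⟨i, -, hi⟩ := exists_lt_of_sum_lt (s := univ) (f := 0) (g := μ) (by simpa using hpos)
  have h0 : 0 < μ ⟨0, i.pos⟩ := hi.trans_le (hμ (Fin.mk_le_mk.mpr i.val.zero_le))
  exact h0.trans_le (single_le_sum (fun j _ => hμ0 j) (by simp [hm]))

theorem exists_injective_mul_sum_le {d k : ℕ} (hkd : k ≤ d) (g : Fin d → ℝ) :
    ∃ σ : Fin k → Fin d, Function.Injective σ ∧ k * ∑ i, g i ≤ d * ∑ a, g (σ a) := by
  rcases Nat.eq_zero_or_pos d with rfl | hd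
  · obtain rfl : k = 0 := by omega
    exact ⟨Fin.elim0, fun a => a.elim0, by simp⟩
  have : NeZero d := ⟨hd.ne'⟩
  -- average over the `d` cyclic shifts of the first `k` indices
  have hshift : ∑ t : Fin d, ∑ a : Fin k, g (Fin.castLE hkd a + t) = k * ∑ i, g i := by
    have hrow (a : Fin k) : ∑ t, g (Fin.castLE hkd a + t) = ∑ i, g i :=
      Fintype.sum_equiv (Equiv.addLeft (Fin.castLE hkd a)) _ _ fun _ => rfl
    simp only [sum_comm (γ := Fin d), hrow, sum_const, card_univ, Fintype.card_fin, nsmul_eq_mul]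
  obtain ⟨t, -, ht⟩ := exists_le_of_sum_le univ_nonempty (f := fun _ : Fin d => k * ∑ i, g i)
    (g := fun t => d * ∑ a : Fin k, g (Fin.castLE hkd a + t))
    (by simp [← mul_sum, hshift])
  exact ⟨fun a => Fin.castLE hkd a + t,
    fun a b h => Fin.castLE_injective hkd (add_right_cancel h), ht⟩

section Selection

variable {n ι R : Type*} [Fintype n] [DecidableEq n]

theorem submatrix_eq_transpose_mul_mul [CommSemiring R] (M : Matrix n n R) (σ : ι → n) :
    M.submatrix σ σ
      = ((1 : Matrix n n R).submatrix id σ)ᵀ * M * (1 : Matrix n n R).submatrix id σ := by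
  ext a b
  simp [mul_apply, one_apply]

theorem transpose_mul_self_submatrix_one [CommSemiring R] [DecidableEq ι] {σ : ι → n}
    (hσ : Function.Injective σ) :
    ((1 : Matrix n n R).submatrix id σ)ᵀ * (1 : Matrix n n R).submatrix id σ = 1 := by
  rw [← Matrix.mul_one ((1 : Matrix n n R).submatrix id σ)ᵀ, ← submatrix_eq_transpose_mul_mul,
    submatrix_one σ hσ]

theorem exists_transpose_mul_self_eq_one_trace_eq {m : ℕ} {C : Matrix n n ℝ}
    (hC : C.IsHermitian) (hrank : C.rank ≤ m) (hm : m ≤ Fintype.card n) :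
    ∃ Y : Matrix n (Fin m) ℝ, Yᵀ * Y = 1 ∧ (Yᵀ * C * Y).trace = C.trace := by
  set U : Matrix n n ℝ := ↑hC.eigenvectorUnitary
  have hUU : Uᵀ * U = 1 := by
    simpa [U, star_eq_conjTranspose] using Unitary.coe_star_mul_self hC.eigenvectorUnitary
  have hUCU : Uᵀ * C * U = diagonal hC.eigenvalues := by
    simpa [U, star_eq_conjTranspose] using hC.conjStarAlgAut_star_eigenvectorUnitary
  -- complete the indices of the nonzero eigenvalues to `m` eigenvectors
  have hcard : #{i | hC.eigenvalues i ≠ 0} ≤ m := by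
    rwa [← Fintype.card_subtype, ← hC.rank_eq_card_non_zero_eigs]
  obtain ⟨J, hJ, hJm⟩ := exists_superset_card_eq hcard (by simpa using hm)
  set e := (equivFinOfCardEq hJm).symm
  set τ : Fin m → n := fun c => e c
  have hτ : Function.Injective τ := Subtype.val_injective.comp e.injective
  have hY (M : Matrix n n ℝ) : (U * (1 : Matrix n n ℝ).submatrix id τ)ᵀ * M *
      (U * (1 : Matrix n n ℝ).submatrix id τ) = (Uᵀ * M * U).submatrix τ τ := by
    rw [submatrix_eq_transpose_mul_mul, transpose_mul]
    simp only [Matrix.mul_assoc]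
  refine ⟨U * (1 : Matrix n n ℝ).submatrix id τ, ?_, ?_⟩
  · simpa [hUU, submatrix_one τ hτ] using hY 1
  · rw [hY, hUCU, submatrix_diagonal _ τ hτ, trace_diagonal, hC.trace_eq_sum_eigenvalues]
    simp only [Function.comp_apply, τ, RCLike.ofReal_real_eq_id, id]
    rw [Equiv.sum_comp e (fun x : J => hC.eigenvalues x), sum_coe_sort]
    refine sum_subset (subset_univ J) fun i _ hi => ?_
    by_contra h
    exact hi (hJ (by simpa using h))

end Selection

theorem feasible_submatrix_one_mul {d m q : ℕ} {σ : Fin q → Fin d} (hσ : Function.Injective σ)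
    {Y : Matrix (Fin q) (Fin m) ℝ} (hY : Yᵀ * Y = 1) :
    feasible d m q ((1 : Matrix (Fin d) (Fin d) ℝ).submatrix id σ * Y) := by
  constructor
  · rw [transpose_mul, Matrix.mul_assoc, ← Matrix.mul_assoc _ _ Y,
      transpose_mul_self_submatrix_one hσ, Matrix.one_mul, hY]
  · have hsupp : {j | ((1 : Matrix (Fin d) (Fin d) ℝ).submatrix id σ * Y) j ≠ 0} ⊆ Set.range σ := by
      intro j hj
      by_contra hjσ
      refine hj (funext fun c => ?_)
      simp only [mul_apply, submatrix_apply, id, one_apply, Pi.zero_apply]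
      exact sum_eq_zero fun a _ => by rw [if_neg fun h => hjσ ⟨a, h.symm⟩, zero_mul]
    calc _ ≤ (Set.range σ).ncard := Set.ncard_le_ncard hsupp (Set.finite_range σ)
      _ = q := by rw [Set.ncard_range_of_injective hσ, Nat.card_eq_fintype_card, Fintype.card_fin]

theorem mul_trace_le_of_forall_feasible_le {d m q : ℕ} {M : Matrix (Fin d) (Fin d) ℝ}
    (hM : M.IsHermitian) (hmq : m ≤ q) (hqd : q ≤ d)
    (hrank : ∀ σ : Fin q → Fin d, (M.submatrix σ σ).rank ≤ m) {c : ℝ}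
    (hc : ∀ W, feasible d m q W → (Wᵀ * M * W).trace ≤ c) : q * M.trace ≤ d * c := by
  obtain ⟨σ, hσ, hsum⟩ := exists_injective_mul_sum_le hqd M.diag
  obtain ⟨Y, hY, htr⟩ := exists_transpose_mul_self_eq_one_trace_eq (hM.submatrix σ) (hrank σ)
    (by simpa using hmq)
  have hW : ((1 : Matrix (Fin d) (Fin d) ℝ).submatrix id σ * Y)ᵀ * M *
      ((1 : Matrix (Fin d) (Fin d) ℝ).submatrix id σ * Y) = Yᵀ * M.submatrix σ σ * Y := by
    rw [submatrix_eq_transpose_mul_mul, transpose_mul]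
    simp only [Matrix.mul_assoc]
  calc q * M.trace ≤ d * (M.submatrix σ σ).trace := hsum
    _ ≤ d * c := by
      gcongr
      rw [← htr, ← hW]
      exact hc _ (feasible_submatrix_one_mul hσ hY)

section Truncation

variable {d : ℕ} {u : Fin d → Fin d → ℝ} {μ : Fin d → ℝ}

theorem trace_sum_smul_vecMulVec_self (hu : ∀ i j, u i ⬝ᵥ u j = if i = j then 1 else 0)
    (s : Finset (Fin d)) : (∑ i ∈ s, μ i • vecMulVec (u i) (u i)).trace = ∑ i ∈ s, μ i := by
  simp [trace_sum, trace_smul, trace_vecMulVec, hu]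

theorem isHermitian_sum_smul_vecMulVec_self (s : Finset (Fin d)) :
    (∑ i ∈ s, μ i • vecMulVec (u i) (u i)).IsHermitian := by
  ext a b
  simp [Matrix.sum_apply, vecMulVec_apply, mul_comm]

theorem rank_sum_filter_lt_smul_vecMulVec_le (hu : ∀ i j, u i ⬝ᵥ u j = if i = j then 1 else 0)
    {m : ℕ} (hmd : m ≤ d) :
    (∑ i ∈ univ.filter (fun i : Fin d => (i : ℕ) < m), μ i • vecMulVec (u i) (u i)).rank ≤ m := by
  have htrunc : ∑ i ∈ univ.filter (fun i : Fin d => (i : ℕ) < m), μ i • vecMulVec (u i) (u i)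
      = ∑ i : Fin d, (if (i : ℕ) < m then μ i else 0) • vecMulVec (u i) (u i) := by
    simp only [sum_filter, ite_smul, zero_smul]
  rw [htrunc, rank_sum_smul_vecMulVec_self hu]
  exact (Fintype.card_subtype_mono _ _ fun i hi => by_contra fun h => hi (if_neg h)).trans_eq
    (Fintype.card_fin_lt_of_le hmd)

theorem trace_truncation_le (hμ0 : ∀ i, 0 ≤ μ i) {m p : ℕ} (W : Matrix (Fin d) (Fin p) ℝ) :
    (Wᵀ * (∑ i ∈ univ.filter (fun i : Fin d => (i : ℕ) < m),
        μ i • vecMulVec (u i) (u i)) * W).trace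
      ≤ (Wᵀ * (∑ i, μ i • vecMulVec (u i) (u i)) * W).trace := by
  rw [trace_transpose_mul_sum_smul_vecMulVec_mul, trace_transpose_mul_sum_smul_vecMulVec_mul]
  exact sum_le_sum_of_subset_of_nonneg (subset_univ _) fun i _ _ =>
    mul_nonneg (hμ0 i) (dotProduct_star_self_nonneg _)

theorem trace_sub_trace_truncation_le (hu : ∀ i j, u i ⬝ᵥ u j = if i = j then 1 else 0)
    (hμ : Antitone μ) (hμ0 : ∀ i, 0 ≤ μ i) {m : ℕ} {W : Matrix (Fin d) (Fin m) ℝ}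
    (hW : Wᵀ * W = 1) :
    (Wᵀ * (∑ i, μ i • vecMulVec (u i) (u i)) * W).trace
        - (Wᵀ * (∑ i ∈ univ.filter (fun i : Fin d => (i : ℕ) < m),
            μ i • vecMulVec (u i) (u i)) * W).trace
      ≤ ∑ i ∈ univ.filter (fun i : Fin d =>
          m ≤ (i : ℕ) ∧ (i : ℕ) < min (∑ i, μ i • vecMulVec (u i) (u i)).rank (2 * m)), μ i := by
  rw [trace_transpose_mul_sum_smul_vecMulVec_mul, trace_transpose_mul_sum_smul_vecMulVec_mul,
    ← sum_filter_add_sum_filter_not univ (fun i : Fin d => (i : ℕ) < m), add_sub_cancel_left]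
  simp only [not_lt]
  have hsum : ∑ i, (Wᵀ *ᵥ u i) ⬝ᵥ (Wᵀ *ᵥ u i) = m := by
    simpa using sum_dotProduct_transpose_mulVec_self hu hW
  refine sum_filter_le_mul_le_sum_filter_lt_min (s := fun i => (Wᵀ *ᵥ u i) ⬝ᵥ (Wᵀ *ᵥ u i)) hμ hμ0
    (fun i hi => hμ.eq_zero_of_card_ne_zero_le hμ0 ?_) (fun i => ?_) (fun i => ?_) hsum.le
  · rwa [rank_sum_smul_vecMulVec_self hu] at hi
  · simpa using dotProduct_star_self_nonneg (Wᵀ *ᵥ u i)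
  · simpa [hu] using dotProduct_transpose_mulVec_self_le hW (u i)

end Truncation

theorem le_div_mul_of_mul_le {x y a b z : ℝ} (hx : 0 ≤ x) (hy : 0 < y) (ha : 0 < a)
    (h : a * y ≤ b * z) : x ≤ b * (x / y) / a * z := by
  rw [show b * (x / y) / a * z = x * (b * z / (a * y)) by field_simp]
  exact le_mul_of_one_le_right hx ((one_le_div (by positivity)).mpr h)

theorem le_min_div_mul_of_mul_le {x y₁ y₂ a₁ a₂ b z : ℝ} (hx : 0 ≤ x) (hy₁ : 0 < y₁)
    (hy₂ : 0 < y₂) (ha₁ : 0 < a₁) (ha₂ : 0 < a₂) (hb : 0 ≤ b) (h₁ : a₁ * y₁ ≤ b * z)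
    (h₂ : a₂ * y₂ ≤ b * z) : x ≤ min (b * (x / y₁) / a₁) (b * (x / y₂) / a₂) * z := by
  have hz : 0 ≤ z := (pos_of_mul_pos_right ((mul_pos ha₁ hy₁).trans_le h₁) hb).le
  rw [min_mul_of_nonneg _ _ hz]
  exact le_min (le_div_mul_of_mul_le hx hy₁ ha₁ h₁) (le_div_mul_of_mul_le hx hy₂ ha₂ h₂)

/-- approximation guarantee: given a spectral decomposition
`A = ∑ᵢ μᵢ uᵢ uᵢᵀ` with orthonormal `u` and non-increasing `μ` (so `μᵢ = λᵢ(A)`),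
let `Am = ∑_{i<m} μᵢ uᵢ uᵢᵀ` be the best rank-`m` approximation. If
`Wm` maximizes `Tr(Wᵀ Am W)` over `F(d,m,k)` and `Ws` maximizes `Tr(Wᵀ A W)`
over `F(d,m,k)`, then `(1-ε)·Tr(Wsᵀ A Ws) ≤ Tr(Wmᵀ A Wm) ≤ Tr(Wsᵀ A Ws)` with
`ε = min(d·G₁/k, d·G₂/m)`, `r = min(rank A, 2m)`,
`G₁ = (∑_{m<i≤r} λᵢ)/(∑_{i≤m} λᵢ)` and `G₂ = (∑_{m<i≤r} λᵢ)/(∑_{i≤d} λᵢ)`. -/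
theorem go_low_rank_approximation_guarantee (d m k : ℕ) (hm : 0 < m) (hmk : m ≤ k)
    (hkd : k ≤ d)
    (A : Matrix (Fin d) (Fin d) ℝ) (hA : A.PosSemidef) (htr : 0 < A.trace)
    (u : Fin d → Fin d → ℝ) (μ : Fin d → ℝ)
    (hu : ∀ i j : Fin d, u i ⬝ᵥ u j = if i = j then 1 else 0)
    (hμ : Antitone μ)
    (hdec : A = ∑ i : Fin d, μ i • vecMulVec (u i) (u i))
    (Am : Matrix (Fin d) (Fin d) ℝ)
    (hAm : Am = ∑ i ∈ Finset.univ.filter (fun i : Fin d => (i : ℕ) < m),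
      μ i • vecMulVec (u i) (u i))
    (r : ℕ) (hr : r = min A.rank (2 * m))
    (G₁ G₂ ε : ℝ)
    (hG₁ : G₁ = (∑ i ∈ Finset.univ.filter (fun i : Fin d => m ≤ (i : ℕ) ∧ (i : ℕ) < r), μ i)
      / (∑ i ∈ Finset.univ.filter (fun i : Fin d => (i : ℕ) < m), μ i))
    (hG₂ : G₂ = (∑ i ∈ Finset.univ.filter (fun i : Fin d => m ≤ (i : ℕ) ∧ (i : ℕ) < r), μ i)
      / (∑ i : Fin d, μ i))
    (hε : ε = min ((d : ℝ) * G₁ / k) ((d : ℝ) * G₂ / m))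
    (Wm Ws : Matrix (Fin d) (Fin m) ℝ)
    (hWm : feasible d m k Wm) (hWs : feasible d m k Ws)
    (hWmmax : ∀ W : Matrix (Fin d) (Fin m) ℝ, feasible d m k W →
      (Wᵀ * Am * W).trace ≤ (Wmᵀ * Am * Wm).trace)
    (hWsmax : ∀ W : Matrix (Fin d) (Fin m) ℝ, feasible d m k W →
      (Wᵀ * A * W).trace ≤ (Wsᵀ * A * Ws).trace) :
    (1 - ε) * (Wsᵀ * A * Ws).trace ≤ (Wmᵀ * A * Wm).trace ∧
      (Wmᵀ * A * Wm).trace ≤ (Wsᵀ * A * Ws).trace := by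
  have hmd : m ≤ d := hmk.trans hkd
  have hμ0 : ∀ i, 0 ≤ μ i := nonneg_of_posSemidef_sum_smul_vecMulVec_self hu (hdec ▸ hA)
  have htrA : A.trace = ∑ i, μ i := by rw [hdec, trace_sum_smul_vecMulVec_self hu]
  have htrAm : Am.trace = ∑ i ∈ univ.filter (fun i : Fin d => (i : ℕ) < m), μ i := by
    rw [hAm, trace_sum_smul_vecMulVec_self hu]
  have hdom (W : Matrix (Fin d) (Fin m) ℝ) : (Wᵀ * Am * W).trace ≤ (Wᵀ * A * W).trace := by
    rw [hdec, hAm]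
    exact trace_truncation_le hμ0 W
  have htail : (Wsᵀ * A * Ws).trace - (Wsᵀ * Am * Ws).trace
      ≤ ∑ i ∈ univ.filter (fun i : Fin d => m ≤ (i : ℕ) ∧ (i : ℕ) < r), μ i := by
    rw [hr, hdec, hAm]
    exact trace_sub_trace_truncation_le hu hμ hμ0 hWs.1
  have hOPT₁ : m * A.trace ≤ d * (Wsᵀ * A * Ws).trace :=
    mul_trace_le_of_forall_feasible_le hA.isHermitian le_rfl hmd (fun σ => rank_le_width _)
      fun W hW => hWsmax W ⟨hW.1, hW.2.trans hmk⟩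
  have hOPT₂ : k * Am.trace ≤ d * (Wsᵀ * A * Ws).trace :=
    mul_trace_le_of_forall_feasible_le (hAm ▸ isHermitian_sum_smul_vecMulVec_self _) hmk hkd
      (fun σ => (rank_submatrix_le _ σ σ).trans (hAm ▸ rank_sum_filter_lt_smul_vecMulVec_le hu hmd))
      fun W hW => (hdom W).trans (hWsmax W hW)
  have hSN : ∑ i ∈ univ.filter (fun i : Fin d => m ≤ (i : ℕ) ∧ (i : ℕ) < r), μ i
      ≤ ε * (Wsᵀ * A * Ws).trace := by
    rw [hε, hG₁, hG₂]
    exact le_min_div_mul_of_mul_le (sum_nonneg fun i _ => hμ0 i)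
      (hμ.sum_filter_lt_pos hμ0 hm (htrA ▸ htr)) (htrA ▸ htr)
      (Nat.cast_pos.mpr (hm.trans_le hmk)) (Nat.cast_pos.mpr hm) d.cast_nonneg
      (htrAm ▸ hOPT₂) (htrA ▸ hOPT₁)
  refine ⟨?_, hWsmax Wm hWm⟩
  linarith [hWmmax Ws hWs, hdom Wm]
end

section
/- Let d, m, k be positive integers with m ≤ k ≤ d and let A ∈ ℝ^{d×d} be symmetric positive semidefinite. Then the maximum of Tr(Wᵀ A W) over the FSPCA feasible set F(d,m,k) is at least (m/d) · Tr(A) = (m/d) · ∑_{i=1}^{d} λ_i(A). -/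
open Matrix

/-!
Selecting the `m` cyclically consecutive coordinates `s, s + 1, …, s + m - 1 (mod d)` gives a
feasible `W` whose objective is the sum of the corresponding `m` diagonal entries of `A`. As `s`
runs over `ℤ/d`, every diagonal entry is picked exactly `m` times, so these `d` objectives
average to `(m/d) · Tr(A)` and one of them is at least that.
-/

namespace Matrix

variable {ι n R : Type*} [DecidableEq n]

theorem transpose_submatrix_one_mul_mul_submatrix_one [Fintype n] [NonAssocSemiring R]
    (A : Matrix n n R) (f : ι → n) :
    ((1 : Matrix n n R).submatrix id f)ᵀ * A * (1 : Matrix n n R).submatrix id f =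
      A.submatrix f f := by
  rw [transpose_submatrix, transpose_one]
  ext i j
  simp [mul_apply, one_apply]

theorem transpose_submatrix_one_mul_submatrix_one [Fintype n] [DecidableEq ι]
    [NonAssocSemiring R] {f : ι → n} (hf : Function.Injective f) :
    ((1 : Matrix n n R).submatrix id f)ᵀ * (1 : Matrix n n R).submatrix id f = 1 := by
  rw [← Matrix.mul_one ((1 : Matrix n n R).submatrix id f)ᵀ,
    transpose_submatrix_one_mul_mul_submatrix_one, submatrix_one f hf]

theorem ncard_setOf_submatrix_one_ne_zero_le [Fintype ι] [Zero R] [One R] (f : ι → n) :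
    {i | (1 : Matrix n n R).submatrix id f i ≠ 0}.ncard ≤ Fintype.card ι := by
  have hrows : {i | (1 : Matrix n n R).submatrix id f i ≠ 0} ⊆ Set.range f := by
    intro i hi
    by_contra hi'
    refine hi (funext fun j => ?_)
    exact one_apply_ne' fun hj => hi' ⟨j, hj⟩
  calc _ ≤ (Set.range f).ncard := Set.ncard_le_ncard hrows (Set.finite_range f)
    _ ≤ (Set.univ : Set ι).ncard := Set.image_univ (f := f) ▸ Set.ncard_image_le
    _ = Fintype.card ι := by rw [Set.ncard_univ, Nat.card_eq_fintype_card]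

theorem sum_trace_submatrix_add_left [Fintype ι] {G : Type*} [AddCommGroup G] [Fintype G]
    [AddCommMonoid R] (A : Matrix G G R) (g : ι → G) :
    ∑ s : G, (A.submatrix (s + g ·) (s + g ·)).trace = Fintype.card ι • A.trace := by
  simp only [trace, diag_submatrix, Function.comp_apply]
  rw [Finset.sum_comm]
  have hshift : ∀ j, ∑ s : G, A.diag (s + g j) = ∑ i, A.diag i := fun j =>
    Fintype.sum_equiv (Equiv.addRight (g j)) _ _ fun _ => rfl
  simp only [hshift, Finset.sum_const, Finset.card_univ]

theorem exists_card_div_mul_trace_le_trace_submatrix_add_left [Fintype ι] {G : Type*}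
    [AddCommGroup G] [Fintype G] {K : Type*} [Field K] [LinearOrder K]
    [IsStrictOrderedRing K] (A : Matrix G G K) (g : ι → G) :
    ∃ s : G, (Fintype.card ι : K) / Fintype.card G * A.trace ≤
      (A.submatrix (s + g ·) (s + g ·)).trace := by
  have hG : (Fintype.card G : K) ≠ 0 := Nat.cast_ne_zero.mpr Fintype.card_ne_zero
  have hsum : ∑ _s : G, (Fintype.card ι : K) / Fintype.card G * A.trace =
      ∑ s : G, (A.submatrix (s + g ·) (s + g ·)).trace := by
    rw [sum_trace_submatrix_add_left, Finset.sum_const, Finset.card_univ, nsmul_eq_mul,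
      nsmul_eq_mul, ← mul_assoc, mul_div_cancel₀ _ hG]
  obtain ⟨s, -, hs⟩ := Finset.exists_le_of_sum_le Finset.univ_nonempty hsum.le
  exact ⟨s, hs⟩

end Matrix

theorem feasible_submatrix_one {d m k : ℕ} (hmk : m ≤ k) {f : Fin m → Fin d}
    (hf : Function.Injective f) : feasible d m k ((1 : Matrix (Fin d) (Fin d) ℝ).submatrix id f) :=
  ⟨transpose_submatrix_one_mul_submatrix_one hf,
    (ncard_setOf_submatrix_one_ne_zero_le f).trans (by simpa using hmk)⟩

theorem fspca_max_ge_fraction_trace_general (d m k : ℕ) (hd : 0 < d)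
    (hmk : m ≤ k) (hkd : k ≤ d)
    (A : Matrix (Fin d) (Fin d) ℝ) :
    ∃ W : Matrix (Fin d) (Fin m) ℝ, feasible d m k W ∧
      (m : ℝ) / (d : ℝ) * A.trace ≤ (Wᵀ * A * W).trace := by
  have : NeZero d := ⟨hd.ne'⟩
  have hmd : m ≤ d := hmk.trans hkd
  obtain ⟨s, hs⟩ := exists_card_div_mul_trace_le_trace_submatrix_add_left A (Fin.castLE hmd)
  refine ⟨_, feasible_submatrix_one hmk ((add_right_injective s).comp (Fin.castLE_injective hmd)),
    ?_⟩
  rw [transpose_submatrix_one_mul_mul_submatrix_one]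
  simpa [Function.comp_def] using hs

/-- for PSD `A`, the maximum of `Tr(Wᵀ A W)` over `F(d,m,k)` is at
least `(m/d)·Tr(A)` (and `Tr(A) = ∑ᵢ λᵢ(A)`): i.e. some feasible `W` attains at
least this value. -/
theorem fspca_max_ge_fraction_trace (d m k : ℕ) (hd : 0 < d) (hm : 0 < m)
    (hmk : m ≤ k) (hkd : k ≤ d)
    (A : Matrix (Fin d) (Fin d) ℝ) (hA : A.PosSemidef) :
    ∃ W : Matrix (Fin d) (Fin m) ℝ, feasible d m k W ∧
      (m : ℝ) / (d : ℝ) * A.trace ≤ (Wᵀ * A * W).trace :=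
  fspca_max_ge_fraction_trace_general d m k hd hmk hkd A
end

section
/- Let d, m, k be positive integers with m ≤ k ≤ d, let A ∈ ℝ^{d×d} be symmetric positive semidefinite, and let B ∈ ℝ^{d×d} be symmetric positive semidefinite with rank(B) ≤ m and A − B positive semidefinite. Then the maximum of Tr(Wᵀ A W) over the FSPCA feasible set F(d,m,k) is at least (k/d) · Tr(B). -/
open Matrix

/-!
Averaging over the `d` cyclic windows of `k` consecutive indices, some window `S` carries at
least the fraction `k / d` of the diagonal of `B`, so `tr B_S ≥ (k / d) tr B` for the principal
submatrix `B_S`. Since `rank B_S ≤ m ≤ k`, the column space of `B_S` lies in an `m`-dimensional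
subspace; for `V` with orthonormal columns spanning it, `V Vᵀ B_S = B_S`, hence
`tr (Vᵀ B_S V) = tr B_S`. Extending `V` by zero rows outside `S` gives a feasible `W` with
`tr (Wᵀ B W) = tr B_S`, and `A - B ⪰ 0` gives `tr (Wᵀ A W) ≥ tr (Wᵀ B W)`.
-/

open Module Submodule

theorem Fin.exists_embedding_nsmul_sum_le {M : Type*} [AddCommMonoid M] [LinearOrder M]
    [IsOrderedCancelAddMonoid M] {d k : ℕ} [NeZero d] (hkd : k ≤ d) (f : Fin d → M) :
    ∃ e : Fin k ↪ Fin d, k • ∑ i, f i ≤ d • ∑ j, f (e j) := by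
  let window (t : Fin d) : Fin k ↪ Fin d :=
    ⟨fun j => t + Fin.castLE hkd j, (add_right_injective t).comp (Fin.castLE_injective hkd)⟩
  have hwindows : ∑ t, ∑ j, f (window t j) = k • ∑ i, f i := by
    rw [Finset.sum_comm]
    exact (Finset.sum_congr rfl fun j _ =>
      Equiv.sum_comp (Equiv.addRight (Fin.castLE hkd j)) f).trans (by simp)
  obtain ⟨t, -, ht⟩ := Finset.exists_le_of_sum_le (s := Finset.univ) Finset.univ_nonempty
    (f := fun _ => k • ∑ i, f i) (g := fun t => d • ∑ j, f (window t j))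
    (by rw [Finset.sum_const, ← Finset.smul_sum, hwindows, Finset.card_univ, Fintype.card_fin])
  exact ⟨window t, ht⟩

theorem Submodule.exists_le_finrank_eq {K V : Type*} [DivisionRing K] [AddCommGroup V]
    [Module K V] [FiniteDimensional K V] (p : Submodule K V) {n : ℕ} (hpn : finrank K p ≤ n)
    (hn : n ≤ finrank K V) : ∃ q : Submodule K V, p ≤ q ∧ finrank K q = n := by
  induction n, hpn using Nat.le_induction with
  | base => exact ⟨p, le_rfl, rfl⟩
  | succ n _ ih =>
    obtain ⟨q, hpq, hq⟩ := ih (by omega)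
    obtain ⟨v, -, hv⟩ : ∃ v ∈ (⊤ : Submodule K V), v ∉ q :=
      SetLike.exists_of_lt (lt_top_iff_ne_top.2 fun h => by
        rw [h, finrank_top] at hq; omega)
    exact ⟨q ⊔ K ∙ v, hpq.trans le_sup_left, by rw [finrank_sup_span_singleton hv, hq]⟩

theorem Submodule.exists_orthonormal_le_span {𝕜 E : Type*} [RCLike 𝕜] [NormedAddCommGroup E]
    [InnerProductSpace 𝕜 E] [FiniteDimensional 𝕜 E] (p : Submodule 𝕜 E) {m : ℕ}
    (hpm : finrank 𝕜 p ≤ m) (hm : m ≤ finrank 𝕜 E) :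
    ∃ w : Fin m → E, Orthonormal 𝕜 w ∧ p ≤ span 𝕜 (Set.range w) := by
  obtain ⟨q, hpq, hq⟩ := p.exists_le_finrank_eq hpm hm
  let b := (stdOrthonormalBasis 𝕜 q).reindex (finCongr hq)
  refine ⟨q.subtypeₗᵢ ∘ b, b.orthonormal.comp_linearIsometry _, hpq.trans fun x hx => ?_⟩
  have hx' : x = ∑ j, inner 𝕜 (b j) ⟨x, hx⟩ • (b j : E) := by
    simpa using (congrArg Subtype.val (b.sum_repr' ⟨x, hx⟩)).symm
  rw [hx']
  exact sum_mem fun j _ => smul_mem _ _ (subset_span ⟨j, rfl⟩)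

theorem Matrix.exists_conjTranspose_mul_self_eq_one_mul_eq {𝕜 ι n : Type*} [RCLike 𝕜]
    [Fintype ι] [Fintype n] [DecidableEq n] (M : Matrix ι n 𝕜) {m : ℕ} (hM : M.rank ≤ m)
    (hm : m ≤ Fintype.card ι) :
    ∃ (W : Matrix ι (Fin m) 𝕜) (Y : Matrix (Fin m) n 𝕜), Wᴴ * W = 1 ∧ W * Y = M := by
  let toEuclidean : (ι → 𝕜) ≃ₗ[𝕜] EuclideanSpace 𝕜 ι :=
    (EuclideanSpace.equiv ι 𝕜).symm.toLinearEquiv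
  let R := (LinearMap.range M.mulVecLin).map (toEuclidean : (ι → 𝕜) →ₗ[𝕜] EuclideanSpace 𝕜 ι)
  have hR : finrank 𝕜 R = M.rank := LinearEquiv.finrank_map_eq _ _
  obtain ⟨w, hw, hRw⟩ := R.exists_orthonormal_le_span (hR.trans_le hM) (by simpa using hm)
  have hcol (l : n) : ∃ c : Fin m → 𝕜, ∑ j, c j • w j = WithLp.toLp 2 (M.col l) :=
    (mem_span_range_iff_exists_fun 𝕜).1
      (hRw (mem_map_of_mem ⟨Pi.single l 1, M.mulVec_single_one l⟩))
  choose c hc using hcol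
  refine ⟨of fun i j => w j i, of fun j l => c l j, ?_, ?_⟩
  · rw [← gram_eq_one_iff_orthonormal.2 hw,
      gram_eq_conjTranspose_mul (EuclideanSpace.basisFun ι 𝕜)]
    simp
  · ext i l
    simpa [mul_apply, mul_comm] using congrArg (· i) (hc l)

theorem Matrix.trace_transpose_mul_mul_self_mul {R ι κ : Type*} [CommSemiring R] [Fintype ι]
    [Fintype κ] [DecidableEq κ] {W : Matrix ι κ R} (hW : Wᵀ * W = 1) (Y : Matrix κ ι R) :
    (Wᵀ * (W * Y) * W).trace = (W * Y).trace := by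
  rw [trace_mul_cycle, ← Matrix.mul_assoc, Matrix.mul_assoc W, hW, Matrix.mul_one]

theorem Matrix.PosSemidef.trace_transpose_mul_mul_le {ι κ : Type*} [Fintype ι] [Fintype κ]
    {A B : Matrix ι ι ℝ} (hAB : (A - B).PosSemidef) (W : Matrix ι κ ℝ) :
    (Wᵀ * B * W).trace ≤ (Wᵀ * A * W).trace := by
  have h := (hAB.conjTranspose_mul_mul_same W).trace_nonneg
  rwa [conjTranspose_eq_transpose_of_trivial, Matrix.mul_sub, Matrix.sub_mul, trace_sub,
    sub_nonneg] at h

theorem Matrix.submatrix_one_mul_mul_submatrix_one {R ι κ : Type*} [NonAssocSemiring R]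
    [Fintype κ] [DecidableEq κ] (A : Matrix κ κ R) (e : ι → κ) :
    (1 : Matrix κ κ R).submatrix e id * A * (1 : Matrix κ κ R).submatrix id e =
      A.submatrix e e := by
  ext s t
  simp [mul_apply, one_apply]

theorem Matrix.setOf_submatrix_one_mul_ne_zero_subset {R ι κ n : Type*} [NonAssocSemiring R]
    [Fintype ι] [DecidableEq κ] (e : ι → κ) (V : Matrix ι n R) :
    {i | ((1 : Matrix κ κ R).submatrix id e * V) i ≠ 0} ⊆ Set.range e := by
  intro i hi
  by_contra h
  refine hi (funext fun j => Finset.sum_eq_zero fun t _ => ?_)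
  change (1 : Matrix κ κ R) i (e t) * V t j = 0
  rw [one_apply_ne fun hit => h ⟨t, hit.symm⟩, zero_mul]

theorem fspca_max_ge_fraction_trace_lowrank_part_general (d m k : ℕ) (hd : 0 < d)
    (hmk : m ≤ k) (hkd : k ≤ d)
    (A B : Matrix (Fin d) (Fin d) ℝ)
    (hrankB : B.rank ≤ m) (hAB : (A - B).PosSemidef) :
    ∃ W : Matrix (Fin d) (Fin m) ℝ, feasible d m k W ∧
      (k : ℝ) / (d : ℝ) * B.trace ≤ (Wᵀ * A * W).trace := by
  have : NeZero d := ⟨hd.ne'⟩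
  obtain ⟨e, he⟩ := Fin.exists_embedding_nsmul_sum_le hkd B.diag
  obtain ⟨V, Y, hV, hVY⟩ := (B.submatrix e e).exists_conjTranspose_mul_self_eq_one_mul_eq
    ((rank_submatrix_le B e e).trans hrankB) (by simpa using hmk)
  rw [conjTranspose_eq_transpose_of_trivial] at hV
  let E : Matrix (Fin d) (Fin k) ℝ := (1 : Matrix (Fin d) (Fin d) ℝ).submatrix id e
  have hconj (M : Matrix (Fin d) (Fin d) ℝ) :
      (E * V)ᵀ * M * (E * V) = Vᵀ * M.submatrix e e * V := by
    rw [← submatrix_one_mul_mul_submatrix_one M e, transpose_mul, transpose_submatrix,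
      transpose_one]
    simp only [Matrix.mul_assoc, E]
  refine ⟨E * V, ⟨?_, ?_⟩, ?_⟩
  · rw [← Matrix.mul_one (E * V)ᵀ, hconj, submatrix_one_embedding, Matrix.mul_one, hV]
  · calc {i | (E * V) i ≠ 0}.ncard ≤ (Set.range e).ncard :=
          Set.ncard_le_ncard (setOf_submatrix_one_mul_ne_zero_subset e V) (Set.finite_range e)
      _ = k := by simp [Set.ncard_range_of_injective e.injective]
  · calc (k : ℝ) / d * B.trace ≤ (B.submatrix e e).trace := by
          rw [div_mul_eq_mul_div, div_le_iff₀ (by positivity)]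
          simpa [trace, nsmul_eq_mul, mul_comm] using he
      _ = (Vᵀ * B.submatrix e e * V).trace := by
          rw [← hVY, Matrix.trace_transpose_mul_mul_self_mul hV]
      _ = ((E * V)ᵀ * B * (E * V)).trace := by rw [hconj]
      _ ≤ ((E * V)ᵀ * A * (E * V)).trace := hAB.trace_transpose_mul_mul_le _

/-- for PSD `A` and PSD `B` with `rank B ≤ m` and `A - B` PSD, the
maximum of `Tr(Wᵀ A W)` over `F(d,m,k)` is at least `(k/d)·Tr(B)`: i.e. some
feasible `W` attains at least this value. -/
theorem fspca_max_ge_fraction_trace_lowrank_part (d m k : ℕ) (hd : 0 < d)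
    (hm : 0 < m) (hmk : m ≤ k) (hkd : k ≤ d)
    (A B : Matrix (Fin d) (Fin d) ℝ) (hA : A.PosSemidef) (hB : B.PosSemidef)
    (hrankB : B.rank ≤ m) (hAB : (A - B).PosSemidef) :
    ∃ W : Matrix (Fin d) (Fin m) ℝ, feasible d m k W ∧
      (k : ℝ) / (d : ℝ) * B.trace ≤ (Wᵀ * A * W).trace :=
  fspca_max_ge_fraction_trace_lowrank_part_general d m k hd hmk hkd A B hrankB hAB
end

section
/- Let t > 1 be a real number and let m, m' be positive integers with m ≤ m'. Then (∑_{i=m'+1}^{2m'} i^{−t}) / (∑_{i=1}^{m'} i^{−t}) ≤ (∑_{i=m+1}^{2m} i^{−t}) / (∑_{i=1}^{m} i^{−t}); that is, the ratio (∑_{i=m+1}^{2m} i^{−t}) / (∑_{i=1}^{m} i^{−t}) is non-increasing in m. -/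
/-!
Write `S n = ∑_{i=1}^n i^{-t}`; the ratio in question is `S (2n) / S n - 1`. Passing from `n` to
`n + 1` adds `(2n+1)^{-t} + (2n+2)^{-t}` to the numerator and `(n+1)^{-t}` to the denominator, so
the ratio decreases as soon as `((2n+1)^{-t} + (2n+2)^{-t}) / (n+1)^{-t}` is at most `S (2n) / S n`.
Pairing the terms of `S (2n)` as `(2i-1)^{-t} + (2i)^{-t}`, this follows termwise from
`(2n+2)^{-t} i^{-t} = (n+1)^{-t} (2i)^{-t}` and `(2n+1)^{-t} i^{-t} ≤ (n+1)^{-t} (2i-1)^{-t}`,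
the latter because `(n+1)(2i-1) ≤ (2n+1) i` for `i ≤ n + 1`.
-/

open Finset

noncomputable def zetaPartialSum (t : ℝ) (n : ℕ) : ℝ :=
  ∑ i ∈ Icc 1 n, (i : ℝ) ^ (-t)

section ZetaPartialSum

variable (t : ℝ)

lemma zetaPartialSum_pos {n : ℕ} (hn : 0 < n) : 0 < zetaPartialSum t n :=
  sum_pos (fun i hi => Real.rpow_pos_of_pos (by exact_mod_cast (mem_Icc.1 hi).1) _)
    (nonempty_Icc.2 hn)

lemma zetaPartialSum_succ (n : ℕ) :
    zetaPartialSum t (n + 1) = zetaPartialSum t n + ((n : ℝ) + 1) ^ (-t) := by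
  rw [zetaPartialSum, sum_Icc_succ_top (by omega), Nat.cast_succ, zetaPartialSum]

lemma zetaPartialSum_add_sum_Icc {m n : ℕ} (hmn : m ≤ n) :
    zetaPartialSum t m + ∑ i ∈ Icc (m + 1) n, (i : ℝ) ^ (-t) = zetaPartialSum t n := by
  simpa only [zetaPartialSum, ← Icc_add_one_left_eq_Ioc, zero_add] using
    sum_Ioc_consecutive (fun i : ℕ => (i : ℝ) ^ (-t)) (Nat.zero_le m) hmn

lemma zetaPartialSum_two_mul (n : ℕ) :
    zetaPartialSum t (2 * n) =
      ∑ i ∈ Icc 1 n, ((2 * (i : ℝ) - 1) ^ (-t) + (2 * (i : ℝ)) ^ (-t)) := by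
  induction n with
  | zero => simp [zetaPartialSum]
  | succ n ih =>
    rw [show 2 * (n + 1) = 2 * n + 1 + 1 by ring, zetaPartialSum_succ, zetaPartialSum_succ, ih,
      sum_Icc_succ_top (by omega)]
    push_cast
    rw [show 2 * ((n : ℝ) + 1) - 1 = 2 * n + 1 by ring,
      show 2 * ((n : ℝ) + 1) = 2 * n + 1 + 1 by ring]
    ring

end ZetaPartialSum

section PowerInequalities

variable {t x y : ℝ}

lemma two_mul_sub_one_rpow_mul_le (ht : 0 ≤ t) (hx : 1 ≤ x) (hxy : x ≤ y) :
    (2 * y - 1) ^ (-t) * x ^ (-t) ≤ y ^ (-t) * (2 * x - 1) ^ (-t) := by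
  rw [← Real.mul_rpow (by linarith) (by linarith), ← Real.mul_rpow (by linarith) (by linarith)]
  exact Real.rpow_le_rpow_of_nonpos (by nlinarith) (by nlinarith) (by linarith)

lemma pair_rpow_mul_le (ht : 0 ≤ t) (hx : 1 ≤ x) (hxy : x ≤ y) :
    ((2 * y - 1) ^ (-t) + (2 * y) ^ (-t)) * x ^ (-t) ≤
      y ^ (-t) * ((2 * x - 1) ^ (-t) + (2 * x) ^ (-t)) := by
  have h_even : (2 * y) ^ (-t) * x ^ (-t) = y ^ (-t) * (2 * x) ^ (-t) := by
    rw [← Real.mul_rpow (by linarith) (by linarith), ← Real.mul_rpow (by linarith) (by linarith),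
      mul_left_comm, mul_assoc]
  rw [add_mul, mul_add, h_even]
  exact add_le_add_left (two_mul_sub_one_rpow_mul_le ht hx hxy) _

end PowerInequalities

section Ratio

variable {t : ℝ}

lemma rpow_add_rpow_mul_zetaPartialSum_le (ht : 0 ≤ t) (n : ℕ) :
    ((2 * (n : ℝ) + 1) ^ (-t) + (2 * (n : ℝ) + 1 + 1) ^ (-t)) * zetaPartialSum t n ≤
      ((n : ℝ) + 1) ^ (-t) * zetaPartialSum t (2 * n) := by
  rw [zetaPartialSum_two_mul, zetaPartialSum, mul_sum, mul_sum]
  refine sum_le_sum fun i hi => ?_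
  have hi' := mem_Icc.1 hi
  have h := pair_rpow_mul_le ht (x := i) (y := n + 1) (by exact_mod_cast hi'.1)
    (by exact_mod_cast hi'.2.trans n.le_succ)
  rwa [show 2 * ((n : ℝ) + 1) - 1 = 2 * n + 1 by ring,
    show 2 * ((n : ℝ) + 1) = 2 * n + 1 + 1 by ring] at h

lemma zetaPartialSum_two_mul_div_succ_le (ht : 0 ≤ t) {n : ℕ} (hn : 0 < n) :
    zetaPartialSum t (2 * (n + 1)) / zetaPartialSum t (n + 1) ≤
      zetaPartialSum t (2 * n) / zetaPartialSum t n := by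
  rw [div_le_div_iff₀ (zetaPartialSum_pos t n.succ_pos) (zetaPartialSum_pos t hn),
    show 2 * (n + 1) = 2 * n + 1 + 1 by ring, zetaPartialSum_succ, zetaPartialSum_succ,
    zetaPartialSum_succ]
  push_cast
  linear_combination rpow_add_rpow_mul_zetaPartialSum_le ht n

lemma antitoneOn_zetaPartialSum_two_mul_div (ht : 0 ≤ t) :
    AntitoneOn (fun n => zetaPartialSum t (2 * n) / zetaPartialSum t n) {n | 1 ≤ n} :=
  antitoneOn_nat_Ici_of_succ_le fun _ hn => zetaPartialSum_two_mul_div_succ_le ht hn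

end Ratio

lemma sum_Icc_succ_two_mul_div_zetaPartialSum (t : ℝ) {n : ℕ} (hn : 0 < n) :
    (∑ i ∈ Icc (n + 1) (2 * n), (i : ℝ) ^ (-t)) / zetaPartialSum t n =
      zetaPartialSum t (2 * n) / zetaPartialSum t n - 1 := by
  rw [← zetaPartialSum_add_sum_Icc t (by omega : n ≤ 2 * n), add_div,
    div_self (zetaPartialSum_pos t hn).ne']
  ring

/-- for real `t > 1`, the ratio
`(∑_{i=m+1}^{2m} i^{-t}) / (∑_{i=1}^{m} i^{-t})` is non-increasing in the
positive integer `m`. -/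
theorem zipf_ratio_antitone (t : ℝ) (ht : 1 < t) (m m' : ℕ) (hm : 0 < m)
    (hmm' : m ≤ m') :
    (∑ i ∈ Finset.Icc (m' + 1) (2 * m'), (i : ℝ) ^ (-t)) /
        (∑ i ∈ Finset.Icc 1 m', (i : ℝ) ^ (-t)) ≤
      (∑ i ∈ Finset.Icc (m + 1) (2 * m), (i : ℝ) ^ (-t)) /
        (∑ i ∈ Finset.Icc 1 m, (i : ℝ) ^ (-t)) := by
  change _ / zetaPartialSum t m' ≤ _ / zetaPartialSum t m
  rw [sum_Icc_succ_two_mul_div_zetaPartialSum t (hm.trans_le hmm'),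
    sum_Icc_succ_two_mul_div_zetaPartialSum t hm]
  have h := antitoneOn_zetaPartialSum_two_mul_div (by linarith) hm (hm.trans_le hmm') hmm'
  exact sub_le_sub_right h 1
end
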